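/- arXiv:1606.02567 — 4 statements merged into one kernel-verified Lean document; each statement's English description precedes it below -/
import Mathlib

section
/- In the setting of an algebraic Cartan connection ω̄ : k → g of type (g,p) on (k,l), the curvature function κ̄ ∈ Λ²(g/p)* ⊗ g defined by Ω̄(X,Y) = κ̄(ω̄X mod p, ω̄Y mod p) is annihilated by the adjoint action of ω̄(l) ⊆ p; that is, for every Z ∈ l, the natural action of ω̄(Z) on Λ²(g/p)* ⊗ g kills κ̄ (an algebraic Bianchi-type identity). -/
/-- algebraic Bianchi identity: for an algebraic Cartan connection
`ω : k → g` of type `(g,p)` on `(k,l)`, the curvature function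
`κ ∈ Λ²(g/p)* ⊗ g`, determined by `Ω(X,Y) = κ(ωX mod p, ωY mod p)`, is
annihilated by the adjoint action of `ω(l) ⊆ p`: for every `Z ∈ l` and all
representatives `ξ, η ∈ g`,
`[ωZ, κ(ξ̄,η̄)] = κ((ad ωZ ξ)‾, η̄) + κ(ξ̄, (ad ωZ η)‾)`
(the action on `g/p` being induced by the adjoint action, well defined since
`ωZ ∈ p`). -/
theorem cartan_curvature_isotropy_invariant
    {g k : Type*} [LieRing g] [LieAlgebra ℝ g] [LieRing k] [LieAlgebra ℝ k]
    (p : LieSubalgebra ℝ g) (l : LieSubalgebra ℝ k) (ω : k →ₗ[ℝ] g)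
    (h1 : ∀ x ∈ l, ω x ∈ p)
    (h2ker : ∀ x : k, (p.toSubmodule.mkQ (ω x) = 0 ↔ x ∈ l))
    (h2surj : Function.Surjective fun x : k => p.toSubmodule.mkQ (ω x))
    (h3 : ∀ X ∈ l, ∀ Y : k, ω ⁅X, Y⁆ = ⁅ω X, ω Y⁆)
    (κ : (g ⧸ p.toSubmodule) →ₗ[ℝ] (g ⧸ p.toSubmodule) →ₗ[ℝ] g)
    (hκ : ∀ X Y : k, ⁅ω X, ω Y⁆ - ω ⁅X, Y⁆
        = κ (p.toSubmodule.mkQ (ω X)) (p.toSubmodule.mkQ (ω Y))) :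
    ∀ Z ∈ l, ∀ ξ η : g,
      ⁅ω Z, κ (p.toSubmodule.mkQ ξ) (p.toSubmodule.mkQ η)⁆
        = κ (p.toSubmodule.mkQ ⁅ω Z, ξ⁆) (p.toSubmodule.mkQ η)
          + κ (p.toSubmodule.mkQ ξ) (p.toSubmodule.mkQ ⁅ω Z, η⁆) := by
  intro Z hZ ξ η
  obtain ⟨X, hX⟩ := h2surj (p.toSubmodule.mkQ ξ)
  obtain ⟨Y, hY⟩ := h2surj (p.toSubmodule.mkQ η)
  simp only at hX hY
  have hωZ : ω Z ∈ p := h1 Z hZ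
  have hξ : ξ - ω X ∈ p.toSubmodule := by
    rw [← Submodule.Quotient.eq]
    simpa [Submodule.mkQ_apply] using hX.symm
  have hη : η - ω Y ∈ p.toSubmodule := by
    rw [← Submodule.Quotient.eq]
    simpa [Submodule.mkQ_apply] using hY.symm
  have e1 : p.toSubmodule.mkQ ⁅ω Z, ξ⁆ = p.toSubmodule.mkQ (ω ⁅Z, X⁆) := by
    rw [h3 Z hZ X]
    simp only [Submodule.mkQ_apply]
    rw [Submodule.Quotient.eq]
    have h : ⁅ω Z, ξ⁆ - ⁅ω Z, ω X⁆ = ⁅ω Z, ξ - ω X⁆ := by rw [lie_sub]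
    rw [h]
    exact p.lie_mem hωZ hξ
  have e2 : p.toSubmodule.mkQ ⁅ω Z, η⁆ = p.toSubmodule.mkQ (ω ⁅Z, Y⁆) := by
    rw [h3 Z hZ Y]
    simp only [Submodule.mkQ_apply]
    rw [Submodule.Quotient.eq]
    have h : ⁅ω Z, η⁆ - ⁅ω Z, ω Y⁆ = ⁅ω Z, η - ω Y⁆ := by rw [lie_sub]
    rw [h]
    exact p.lie_mem hωZ hη
  rw [← hX, ← hY, e1, e2, ← hκ, ← hκ, ← hκ]
  rw [lie_sub, ← h3 Z hZ ⁅X, Y⁆, leibniz_lie (ω Z) (ω X) (ω Y),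
    leibniz_lie Z X Y, map_add, h3 Z hZ X, h3 Z hZ Y]
  abel
end

section
/- Let k be a graded Lie algebra of the form k = g_- ⊕ k_0 where g_- is a negatively graded nilpotent Lie algebra generated in degree −1, k_0 ⊆ Der(g_-) acts faithfully on g_{-1}, and the Tanaka prolongation of g_- with respect to k_0 is contained in nonpositive degrees. Then every derivation of k of strictly positive degree vanishes; i.e., H^{1}_i(k,k) = 0 for all i > 0. -/
/-- let `k = g₋ ⊕ k₀` be a graded Lie algebra where the negative
part is generated in degree `−1`, `k₀` acts faithfully on `g₋₁`, and the
Tanaka prolongation of `g₋` with respect to `k₀` is contained in nonpositive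
degrees (every positive-degree map which is a derivation on the negative part
vanishes there).  Then every derivation of `k` of strictly positive degree
vanishes, i.e. `H¹ᵢ(k,k) = 0` for all `i > 0`. -/
theorem no_positive_degree_derivations
    {k : Type*} [LieRing k] [LieAlgebra ℝ k] [FiniteDimensional ℝ k]
    (grd : ℤ → Submodule ℝ k) (hint : DirectSum.IsInternal grd)
    (hbr : ∀ i j : ℤ, ∀ x ∈ grd i, ∀ y ∈ grd j, ⁅x, y⁆ ∈ grd (i + j))
    (hpos : ∀ i : ℤ, 0 < i → grd i = ⊥)
    (hgen : ∀ i : ℤ, i ≤ -1 → grd (i - 1) ≤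
      Submodule.span ℝ {z : k | ∃ x ∈ grd (-1), ∃ y ∈ grd i, z = ⁅x, y⁆})
    (hfaithful : ∀ x ∈ grd 0, (∀ y ∈ grd (-1), ⁅x, y⁆ = 0) → x = 0)
    (hprol : ∀ i : ℤ, 0 < i → ∀ u : k →ₗ[ℝ] k,
      (∀ j : ℤ, ∀ x ∈ grd j, u x ∈ grd (j + i)) →
      (∀ i' j' : ℤ, i' < 0 → j' < 0 → ∀ x ∈ grd i', ∀ y ∈ grd j',
        u ⁅x, y⁆ = ⁅u x, y⁆ + ⁅x, u y⁆) →
      ∀ j : ℤ, j < 0 → ∀ x ∈ grd j, u x = 0) :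
    ∀ i : ℤ, 0 < i → ∀ δ : k →ₗ[ℝ] k,
      (∀ j : ℤ, ∀ x ∈ grd j, δ x ∈ grd (j + i)) →
      (∀ x y : k, δ ⁅x, y⁆ = ⁅δ x, y⁆ + ⁅x, δ y⁆) →
      δ = 0 := by
  intro i hi δ hdeg hder
  have hzero : ∀ j : ℤ, ∀ x ∈ grd j, δ x = 0 := by
    intro j x hx
    rcases lt_or_ge j 0 with hj | hj
    · exact hprol i hi δ hdeg (fun i' j' _ _ x _ y _ => hder x y) j hj x hx
    · have h := hdeg j x hx
      rw [hpos (j + i) (by omega)] at h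
      simpa using h
  have hsup : (⨆ j, grd j) = ⊤ := hint.submodule_iSup_eq_top
  ext x
  have hx : x ∈ (⊤ : Submodule ℝ k) := trivial
  rw [← hsup] at hx
  simp only [LinearMap.zero_apply]
  refine Submodule.iSup_induction (motive := fun y => δ y = 0) grd hx (fun j y hy => hzero j y hy) (map_zero δ) ?_
  intro a b ha hb
  rw [map_add, ha, hb, add_zero]
end

section
/- Let L be a graded nilpotent DGLA and fix a splitting with δ as before. For each x ∈ MC(L), the map Ψ_x : C^0 → C^0 defined by Ψ_x(y) = δ(e^y ∗ x) is bijective, with inverse depending polynomially on x. Consequently there is a polynomial map η : MC(L) → C^0 such that e^{η(x)} ∗ x ∈ H¹(L) ⊕ C¹ for all x ∈ MC(L). -/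
/-- A differential graded Lie algebra over `ℝ`: a graded vector space with a
degree-0 bracket and a degree-1 differential squaring to zero, satisfying
graded skew-symmetry, the graded Jacobi identity and the graded Leibniz rule. -/
structure DGLA (V : Type*) [AddCommGroup V] [Module ℝ V] where
  grade : ℤ → Submodule ℝ V
  internal : DirectSum.IsInternal grade
  br : V →ₗ[ℝ] V →ₗ[ℝ] V
  br_grade : ∀ p q : ℤ, ∀ x ∈ grade p, ∀ y ∈ grade q, br x y ∈ grade (p + q)
  d : V →ₗ[ℝ] V
  d_grade : ∀ p : ℤ, ∀ x ∈ grade p, d x ∈ grade (p + 1)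
  d_sq : ∀ x : V, d (d x) = 0
  skew : ∀ p q : ℤ, ∀ x ∈ grade p, ∀ y ∈ grade q,
    br x y = ((-1 : ℝ) ^ (p * q + 1).natAbs) • br y x
  jacobi : ∀ p q r : ℤ, ∀ x ∈ grade p, ∀ y ∈ grade q, ∀ z ∈ grade r,
    ((-1 : ℝ) ^ (p * r).natAbs) • br x (br y z)
      + ((-1 : ℝ) ^ (q * p).natAbs) • br y (br z x)
      + ((-1 : ℝ) ^ (r * q).natAbs) • br z (br x y) = 0
  leibniz : ∀ p : ℤ, ∀ x ∈ grade p, ∀ y : V,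
    d (br x y) = br (d x) y + ((-1 : ℝ) ^ p.natAbs) • br x (d y)

namespace DGLA

variable {V : Type*} [AddCommGroup V] [Module ℝ V]

/-- The Maurer–Cartan condition: `x ∈ L¹` and `dx + (1/2)[x,x] = 0`. -/
def IsMC (L : DGLA V) (x : V) : Prop :=
  x ∈ L.grade 1 ∧ L.d x + (1 / 2 : ℝ) • L.br x x = 0

/-- The gauge action of `exp y` on `L¹`, obtained by exponentiating the affine
infinitesimal action `y ∗ x = [y,x] − dy`; since `ad y` is nilpotent (killed by
the `N`-th iterate), the exponential series is the displayed finite (polynomial)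
sum: `e^y ∗ x = Σ (1/n!) (ad y)ⁿ x − Σ (1/(n+1)!) (ad y)ⁿ (dy)`. -/
noncomputable def gaugeExp (L : DGLA V) (N : ℕ) (y x : V) : V :=
  (∑ n ∈ Finset.range N, ((n.factorial : ℝ))⁻¹ • (fun w => L.br y w)^[n] x)
    - ∑ n ∈ Finset.range N, (((n + 1).factorial : ℝ))⁻¹ • (fun w => L.br y w)^[n] (L.d y)

end DGLA

/-- A graded nilpotent DGLA: a finite-dimensional DGLA together with an
additional ("lower") grading in strictly positive degrees, compatible with the
bracket and the differential (both of lower-degree zero). -/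
structure GradedNilDGLA (V : Type*) [AddCommGroup V] [Module ℝ V] extends DGLA V where
  lgrade : ℤ → Submodule ℝ V
  linternal : DirectSum.IsInternal lgrade
  lpos : ∀ i : ℤ, i ≤ 0 → lgrade i = ⊥
  br_lgrade : ∀ i j : ℤ, ∀ x ∈ lgrade i, ∀ y ∈ lgrade j, br x y ∈ lgrade (i + j)
  d_lgrade : ∀ i : ℤ, ∀ x ∈ lgrade i, d x ∈ lgrade i

namespace PsiAux

variable {V : Type*} [AddCommGroup V] [Module ℝ V]

/-- Descending filtration associated to the lower grading. -/
def filt (L : GradedNilDGLA V) (n : ℕ) : Submodule ℝ V :=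
  ⨆ j : ℤ, ⨆ _ : (n : ℤ) ≤ j, L.lgrade j

theorem lgrade_le_filt (L : GradedNilDGLA V) {n : ℕ} {j : ℤ} (h : (n : ℤ) ≤ j) :
    L.lgrade j ≤ filt L n := by
  refine le_trans ?_ (le_iSup _ j)
  exact le_iSup (fun _ : (n : ℤ) ≤ j => L.lgrade j) h

theorem filt_antitone (L : GradedNilDGLA V) {m n : ℕ} (h : m ≤ n) :
    filt L n ≤ filt L m := by
  refine iSup_le fun j => iSup_le fun hj => lgrade_le_filt L ?_
  exact le_trans (by exact_mod_cast h) hj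

theorem filt_one (L : GradedNilDGLA V) : filt L 1 = ⊤ := by
  rw [eq_top_iff, ← L.linternal.submodule_iSup_eq_top]
  refine iSup_le fun j => ?_
  rcases le_or_gt j 0 with hj | hj
  · rw [L.lpos j hj]; exact bot_le
  · exact lgrade_le_filt L (by exact_mod_cast hj)

theorem map_filt (L : GradedNilDGLA V) (f : V →ₗ[ℝ] V)
    (hf : ∀ j : ℤ, ∀ x ∈ L.lgrade j, f x ∈ L.lgrade j) (n : ℕ) :
    ∀ x ∈ filt L n, f x ∈ filt L n := by
  have : filt L n ≤ (filt L n).comap f := by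
    refine iSup_le fun j => iSup_le fun hj => fun x hx => ?_
    exact lgrade_le_filt L hj (hf j x hx)
  exact fun x hx => this hx

theorem br_filt (L : GradedNilDGLA V) (m n : ℕ) :
    ∀ x ∈ filt L m, ∀ y ∈ filt L n, L.br x y ∈ filt L (m + n) := by
  have inner : ∀ i : ℤ, (m : ℤ) ≤ i → ∀ x ∈ L.lgrade i,
      ∀ y ∈ filt L n, L.br x y ∈ filt L (m + n) := by
    intro i hi x hx
    have : filt L n ≤ (filt L (m + n)).comap (L.br x) := by
      refine iSup_le fun j => iSup_le fun hj => fun y hy => ?_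
      refine lgrade_le_filt L ?_ (L.br_lgrade i j x hx y hy)
      push_cast; omega
    exact fun y hy => this hy
  intro x hx y hy
  have : filt L m ≤ (filt L (m + n)).comap (L.br.flip y) := by
    refine iSup_le fun i => iSup_le fun hi => fun x' hx' => ?_
    exact inner i hi x' hx' y hy
  exact this hx

theorem filt_bot (L : GradedNilDGLA V) [FiniteDimensional ℝ V] :
    ∃ M : ℕ, filt L (M + 1) = ⊥ := by
  have hfin : {j : ℤ | L.lgrade j ≠ ⊥}.Finite :=
    Submodule.finite_ne_bot_of_iSupIndep L.linternal.submodule_iSupIndep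
  obtain ⟨B, hB⟩ := hfin.bddAbove
  obtain ⟨M, hM⟩ := exists_nat_ge (|B| + 1)
  refine ⟨M, ?_⟩
  rw [eq_bot_iff]
  refine iSup_le fun j => iSup_le fun hj => ?_
  by_contra h
  have hne : L.lgrade j ≠ ⊥ := fun hbot => h (by rw [hbot])
  have : j ≤ B := hB hne
  have hB' : B ≤ |B| := le_abs_self B
  omega

/-- The iterated bracket preserves the (upper) grade when `y` has grade 0. -/
theorem ad_pow_grade (L : GradedNilDGLA V) {y : V} (hy : y ∈ L.grade 0) {p : ℤ} {v : V}
    (hv : v ∈ L.grade p) (n : ℕ) : (fun w => L.br y w)^[n] v ∈ L.grade p := by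
  induction n with
  | zero => simpa using hv
  | succ k ih =>
      rw [Function.iterate_succ_apply']
      have := L.br_grade 0 p y hy _ ih
      simpa using this

theorem ad_pow_filt (L : GradedNilDGLA V) {y v : V} (hv : v ∈ filt L 1) (n : ℕ) :
    (fun w => L.br y w)^[n] v ∈ filt L (n + 1) := by
  induction n with
  | zero => simpa using hv
  | succ k ih =>
      rw [Function.iterate_succ_apply']
      have hy : y ∈ filt L 1 := by rw [filt_one]; exact Submodule.mem_top
      have := br_filt L 1 (k + 1) y hy _ ih
      refine filt_antitone L (by omega) this

theorem ad_pow_sub_filt (L : GradedNilDGLA V) {y y' v v' : V} {i : ℕ}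
    (hd : y - y' ∈ filt L i) (hv : v ∈ filt L 1) (hv' : v' ∈ filt L 1)
    (hvv : v - v' ∈ filt L i) (n : ℕ) :
    (fun w => L.br y w)^[n] v - (fun w => L.br y' w)^[n] v' ∈ filt L (i + n) := by
  induction n with
  | zero => simpa using hvv
  | succ k ih =>
      rw [Function.iterate_succ_apply', Function.iterate_succ_apply']
      have hy : y ∈ filt L 1 := by rw [filt_one]; exact Submodule.mem_top
      have key : L.br y ((fun w => L.br y w)^[k] v) - L.br y' ((fun w => L.br y' w)^[k] v')
          = L.br y ((fun w => L.br y w)^[k] v - (fun w => L.br y' w)^[k] v')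
            + L.br (y - y') ((fun w => L.br y' w)^[k] v') := by
        simp [map_sub, LinearMap.sub_apply]
      rw [key]
      refine Submodule.add_mem _ ?_ ?_
      · exact filt_antitone L (by omega) (br_filt L 1 (i + k) y hy _ ih)
      · exact filt_antitone L (by omega)
          (br_filt L i (k + 1) _ hd _ (ad_pow_filt L hv' k))

/-- The "higher order" part of the gauge action. -/
noncomputable def Rfun (L : GradedNilDGLA V) (N' : ℕ) (x y : V) : V :=
  (∑ n ∈ Finset.range N', (((n + 1).factorial : ℝ))⁻¹ • (fun w => L.br y w)^[n + 1] x)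
    - ∑ n ∈ Finset.range N', (((n + 1 + 1).factorial : ℝ))⁻¹ • (fun w => L.br y w)^[n + 1] (L.d y)

theorem gauge_eq (L : GradedNilDGLA V) (N' : ℕ) (x y : V) :
    L.toDGLA.gaugeExp (N' + 1) y x = x - L.d y + Rfun L N' x y := by
  unfold DGLA.gaugeExp Rfun
  rw [Finset.sum_range_succ' (fun n => ((n.factorial : ℝ))⁻¹ • (fun w => L.br y w)^[n] x),
    Finset.sum_range_succ' (fun n => (((n + 1).factorial : ℝ))⁻¹ • (fun w => L.br y w)^[n] (L.d y))]
  simp [Nat.factorial]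
  abel

theorem Rfun_grade (L : GradedNilDGLA V) (N' : ℕ) {x y : V}
    (hx : x ∈ L.grade 1) (hy : y ∈ L.grade 0) : Rfun L N' x y ∈ L.grade 1 := by
  have hdy : L.d y ∈ L.grade 1 := by simpa using L.d_grade 0 y hy
  refine Submodule.sub_mem _ (Submodule.sum_mem _ fun n _ => ?_)
    (Submodule.sum_mem _ fun n _ => ?_)
  · exact Submodule.smul_mem _ _ (ad_pow_grade L hy hx _)
  · exact Submodule.smul_mem _ _ (ad_pow_grade L hy hdy _)

theorem Rfun_sub_filt (L : GradedNilDGLA V) (N' : ℕ) {x y y' : V} {i : ℕ}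
    (hd : y - y' ∈ filt L i) :
    Rfun L N' x y - Rfun L N' x y' ∈ filt L (i + 1) := by
  have htop : ∀ v : V, v ∈ filt L 1 := by
    intro v; rw [filt_one]; exact Submodule.mem_top
  have key : Rfun L N' x y - Rfun L N' x y'
      = (∑ n ∈ Finset.range N', (((n + 1).factorial : ℝ))⁻¹ •
          ((fun w => L.br y w)^[n + 1] x - (fun w => L.br y' w)^[n + 1] x))
        - ∑ n ∈ Finset.range N', (((n + 1 + 1).factorial : ℝ))⁻¹ •
          ((fun w => L.br y w)^[n + 1] (L.d y) - (fun w => L.br y' w)^[n + 1] (L.d y')) := by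
    unfold Rfun
    simp only [smul_sub, Finset.sum_sub_distrib]
    abel
  rw [key]
  refine Submodule.sub_mem _ (Submodule.sum_mem _ fun n _ => ?_)
    (Submodule.sum_mem _ fun n _ => ?_)
  · have h1 := ad_pow_sub_filt L hd (htop x) (htop x)
      (by simpa using Submodule.zero_mem (filt L i)) (n + 1)
    exact Submodule.smul_mem _ _ (filt_antitone L (by omega) h1)
  · have hdd : L.d y - L.d y' ∈ filt L i := by
      rw [← map_sub]; exact map_filt L L.d L.d_lgrade i _ hd
    have h1 := ad_pow_sub_filt L hd (htop _) (htop _) hdd (n + 1)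
    exact Submodule.smul_mem _ _ (filt_antitone L (by omega) h1)

/-- The fixed-point map whose fixed points solve `Ψ_x(y) = z`. -/
noncomputable def Tmap (L : GradedNilDGLA V) (N' : ℕ) (δ : V →ₗ[ℝ] V) (x z y : V) : V :=
  δ x - z + δ (Rfun L N' x y)

end PsiAux
/-- in a graded nilpotent DGLA with fixed splitting encoded by the
homotopy operator `δ` (so `δd` is the projection onto the complement `C`, and
`C⁰ = {y ∈ L⁰ | δ(dy) = y}`), for each Maurer–Cartan element `x` the map
`Ψ_x : C⁰ → C⁰`, `Ψ_x(y) = δ(e^y ∗ x)`, is bijective; consequently there is a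
map `η : MC(L) → C⁰` with `e^{η(x)} ∗ x ∈ H¹(L) ⊕ C¹` (i.e. the projection
`dδ` onto the boundaries kills `e^{η(x)} ∗ x`) for all `x ∈ MC(L)`. -/
theorem Psi_bijective_and_eta
    {V : Type*} [AddCommGroup V] [Module ℝ V] [FiniteDimensional ℝ V]
    (L : GradedNilDGLA V) (δ : V →ₗ[ℝ] V)
    (hδgrade : ∀ p : ℤ, ∀ x ∈ L.grade p, δ x ∈ L.grade (p - 1))
    (hδlgrade : ∀ i : ℤ, ∀ x ∈ L.lgrade i, δ x ∈ L.lgrade i)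
    (hδδ : ∀ v : V, δ (δ v) = 0)
    (hdδd : ∀ v : V, L.d (δ (L.d v)) = L.d v)
    (hδdδ : ∀ v : V, δ (L.d (δ v)) = δ v)
    (N : ℕ) (hN : ∀ y ∈ L.grade 0, ∀ v : V, (fun w => L.br y w)^[N] v = 0) :
    (∀ x : V, L.toDGLA.IsMC x →
      Set.BijOn (fun y => δ (L.toDGLA.gaugeExp N y x))
        {y : V | y ∈ L.grade 0 ∧ δ (L.d y) = y}
        {y : V | y ∈ L.grade 0 ∧ δ (L.d y) = y}) ∧
    ∃ η : V → V, ∀ x : V, L.toDGLA.IsMC x →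
      (η x ∈ L.grade 0 ∧ δ (L.d (η x)) = η x) ∧
      L.d (δ (L.toDGLA.gaugeExp N (η x) x)) = 0 := by

  classical
  rcases N with _ | N'
  · -- trivial case: the whole space is zero
    have hall : ∀ v : V, v = 0 := by
      intro v
      simpa using hN 0 (Submodule.zero_mem _) v
    constructor
    · intro x _
      refine ⟨?_, ?_, ?_⟩
      · intro y _
        refine ⟨?_, ?_⟩
        · show δ (L.toDGLA.gaugeExp 0 y x) ∈ L.grade 0
          rw [hall (δ (L.toDGLA.gaugeExp 0 y x))]; exact Submodule.zero_mem _
        · show δ (L.d (δ (L.toDGLA.gaugeExp 0 y x))) = δ (L.toDGLA.gaugeExp 0 y x)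
          rw [hall (δ (L.toDGLA.gaugeExp 0 y x))]; simp
      · intro y _ y' _ _
        rw [hall y, hall y']
      · intro z _
        refine ⟨0, ⟨Submodule.zero_mem _, by simp⟩, ?_⟩
        show δ (L.toDGLA.gaugeExp 0 0 x) = z
        rw [hall z, hall (δ (L.toDGLA.gaugeExp 0 0 x))]
    · refine ⟨fun _ => 0, fun x _ => ⟨⟨Submodule.zero_mem _, by simp⟩, ?_⟩⟩
      rw [hall (δ (L.toDGLA.gaugeExp 0 0 x))]; simp
  · -- main case
    obtain ⟨M, hM⟩ := PsiAux.filt_bot L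
    have htop : ∀ v : V, v ∈ PsiAux.filt L 1 := fun v => by
      rw [PsiAux.filt_one]; exact Submodule.mem_top
    have hδfilt : ∀ n : ℕ, ∀ v ∈ PsiAux.filt L n, δ v ∈ PsiAux.filt L n :=
      fun n => PsiAux.map_filt L δ hδlgrade n
    set S : Set V := {y : V | y ∈ L.grade 0 ∧ δ (L.d y) = y} with hS
    have h0S : (0 : V) ∈ S := ⟨Submodule.zero_mem _, by simp⟩
    have master : ∀ x : V, L.toDGLA.IsMC x →
        Set.BijOn (fun y => δ (L.toDGLA.gaugeExp (N' + 1) y x)) S S ∧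
        ∃ y ∈ S, δ (L.toDGLA.gaugeExp (N' + 1) y x) = 0 := by
      intro x hx
      obtain ⟨hx1, -⟩ := hx
      have hδx : δ x ∈ L.grade 0 := by simpa using hδgrade 1 x hx1
      have psi_eq : ∀ y : V, δ (L.toDGLA.gaugeExp (N' + 1) y x)
          = δ x - δ (L.d y) + δ (PsiAux.Rfun L N' x y) := by
        intro y; rw [PsiAux.gauge_eq, map_add, map_sub]
      have mapsto : ∀ y ∈ S, δ (L.toDGLA.gaugeExp (N' + 1) y x) ∈ S := by
        intro y hy
        obtain ⟨hy0, -⟩ := hy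
        have hg1 : L.toDGLA.gaugeExp (N' + 1) y x ∈ L.grade 1 := by
          rw [PsiAux.gauge_eq]
          have hdy : L.d y ∈ L.grade 1 := by simpa using L.d_grade 0 y hy0
          exact Submodule.add_mem _ (Submodule.sub_mem _ hx1 hdy)
            (PsiAux.Rfun_grade L N' hx1 hy0)
        exact ⟨by simpa using hδgrade 1 _ hg1, hδdδ _⟩
      have TmapS : ∀ z ∈ S, ∀ y : V, y ∈ L.grade 0 → PsiAux.Tmap L N' δ x z y ∈ S := by
        intro z hz y hy0
        obtain ⟨hz0, hzfix⟩ := hz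
        refine ⟨?_, ?_⟩
        · exact Submodule.add_mem _ (Submodule.sub_mem _ hδx hz0)
            (by simpa using hδgrade 1 _ (PsiAux.Rfun_grade L N' hx1 hy0))
        · have e1 : PsiAux.Tmap L N' δ x z y = δ (x - L.d z + PsiAux.Rfun L N' x y) := by
            rw [map_add, map_sub, hzfix]; rfl
          rw [e1]; exact hδdδ _
      have contr : ∀ z y y' : V, ∀ i : ℕ, y - y' ∈ PsiAux.filt L i →
          PsiAux.Tmap L N' δ x z y - PsiAux.Tmap L N' δ x z y' ∈ PsiAux.filt L (i + 1) := by
        intro z y y' i hi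
        have e : PsiAux.Tmap L N' δ x z y - PsiAux.Tmap L N' δ x z y'
            = δ (PsiAux.Rfun L N' x y - PsiAux.Rfun L N' x y') := by
          rw [map_sub]; unfold PsiAux.Tmap; abel
        rw [e]; exact hδfilt _ _ (PsiAux.Rfun_sub_filt L N' hi)
      have exfix : ∀ z ∈ S, ∃ y ∈ S, PsiAux.Tmap L N' δ x z y = y := by
        intro z hz
        have iterS : ∀ k : ℕ, (PsiAux.Tmap L N' δ x z)^[k] 0 ∈ S := by
          intro k; induction k with
          | zero => exact h0S
          | succ k ih =>
              rw [Function.iterate_succ_apply']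
              exact TmapS z hz _ ih.1
        have step : ∀ k : ℕ, (PsiAux.Tmap L N' δ x z)^[k + 1] 0
            - (PsiAux.Tmap L N' δ x z)^[k] 0 ∈ PsiAux.filt L (k + 1) := by
          intro k; induction k with
          | zero => exact htop _
          | succ k ih =>
              have h2 := contr z ((PsiAux.Tmap L N' δ x z)^[k + 1] 0)
                ((PsiAux.Tmap L N' δ x z)^[k] 0) (k + 1) ih
              simpa [Function.iterate_succ_apply'] using h2
        refine ⟨(PsiAux.Tmap L N' δ x z)^[M + 1] 0, iterS (M + 1), ?_⟩
        have h1 : (PsiAux.Tmap L N' δ x z)^[M + 1 + 1] 0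
            - (PsiAux.Tmap L N' δ x z)^[M + 1] 0 ∈ PsiAux.filt L (M + 1) :=
          PsiAux.filt_antitone L (by omega) (step (M + 1))
        rw [hM, Submodule.mem_bot] at h1
        have h3 := sub_eq_zero.mp h1
        rw [← Function.iterate_succ_apply' (PsiAux.Tmap L N' δ x z) (M + 1) 0]
        exact h3
      have uniq : ∀ z y y' : V, PsiAux.Tmap L N' δ x z y = y →
          PsiAux.Tmap L N' δ x z y' = y' → y = y' := by
        intro z y y' hy hy'
        have key : ∀ i : ℕ, y - y' ∈ PsiAux.filt L (i + 1) := by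
          intro i; induction i with
          | zero => exact htop _
          | succ i ih =>
              have h2 := contr z y y' (i + 1) ih
              rwa [hy, hy'] at h2
        have h4 := key M
        rw [hM, Submodule.mem_bot] at h4
        exact sub_eq_zero.mp h4
      have psi_fix : ∀ y ∈ S, ∀ z : V,
          δ (L.toDGLA.gaugeExp (N' + 1) y x) = z ↔ PsiAux.Tmap L N' δ x z y = y := by
        intro y hy z
        rw [psi_eq, hy.2]
        show δ x - y + δ (PsiAux.Rfun L N' x y) = z
          ↔ δ x - z + δ (PsiAux.Rfun L N' x y) = y
        generalize δ (PsiAux.Rfun L N' x y) = r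
        constructor
        · intro h; rw [← h]; abel
        · intro h; rw [← h]; abel
      refine ⟨⟨fun y hy => mapsto y hy, ?_, ?_⟩, ?_⟩
      · intro y hy y' hy' h
        have h1 : PsiAux.Tmap L N' δ x (δ (L.toDGLA.gaugeExp (N' + 1) y x)) y = y :=
          (psi_fix y hy _).mp rfl
        have h2 : PsiAux.Tmap L N' δ x (δ (L.toDGLA.gaugeExp (N' + 1) y x)) y' = y' :=
          (psi_fix y' hy' _).mp h.symm
        exact uniq _ y y' h1 h2
      · intro z hz
        obtain ⟨y, hyS, hfix⟩ := exfix z hz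
        exact ⟨y, hyS, (psi_fix y hyS z).mpr hfix⟩
      · obtain ⟨y, hyS, hfix⟩ := exfix 0 h0S
        exact ⟨y, hyS, (psi_fix y hyS 0).mpr hfix⟩
    constructor
    · intro x hx; exact (master x hx).1
    · have hex : ∀ x : V, ∃ y : V, L.toDGLA.IsMC x →
          (y ∈ L.grade 0 ∧ δ (L.d y) = y) ∧
            L.d (δ (L.toDGLA.gaugeExp (N' + 1) y x)) = 0 := by
        intro x
        by_cases hx : L.toDGLA.IsMC x
        · obtain ⟨-, y, hyS, hy0⟩ := master x hx
          exact ⟨y, fun _ => ⟨hyS, by rw [hy0]; simp⟩⟩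
        · exact ⟨0, fun h => absurd h hx⟩
      choose η hη using hex
      exact ⟨η, fun x hx => hη x hx⟩
end

section
/- Let L be a graded nilpotent DGLA with H^0(L) = 0, and let M ⊆ H¹(L) be the Kuranishi set (the zero locus of the quadratic obstruction map x ↦ projection to H²(L) ⊕ C² of [Φ⁻¹x, Φ⁻¹x]). Then the action map exp(L^0) × M → MC(L), (e^y, m) ↦ e^y ∗ ξ(m), is a bijection with polynomial inverse, where ξ : M → MC(L) is the representing section ξ = Φ⁻¹|_M. In particular MC(L) → M, x ↦ Φ(e^{η(x)} ∗ x), is a trivial principal bundle for the gauge group. -/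
set_option linter.unusedSectionVars false

namespace KurAux

open Finset

variable {V : Type*} [AddCommGroup V] [Module ℝ V]

section Signs

variable (L : DGLA V)

lemma sym11 {x y : V} (hx : x ∈ L.grade 1) (hy : y ∈ L.grade 1) :
    L.br x y = L.br y x := by
  have h := L.skew 1 1 x hx y hy
  norm_num at h
  exact h

lemma mem01 {y u : V} (hy : y ∈ L.grade 0) (hu : u ∈ L.grade 1) :
    L.br y u ∈ L.grade 1 := by
  have := L.br_grade 0 1 y hy u hu
  norm_num at this
  exact this

lemma mem11 {u v : V} (hu : u ∈ L.grade 1) (hv : v ∈ L.grade 1) :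
    L.br u v ∈ L.grade 2 := by
  have := L.br_grade 1 1 u hu v hv
  norm_num at this
  exact this

lemma dmem1 {u : V} (hu : u ∈ L.grade 0) : L.d u ∈ L.grade 1 := by
  have := L.d_grade 0 u hu
  norm_num at this
  exact this

lemma dmem2 {u : V} (hu : u ∈ L.grade 1) : L.d u ∈ L.grade 2 := by
  have := L.d_grade 1 u hu
  norm_num at this
  exact this

lemma der0 {y u v : V} (hy : y ∈ L.grade 0) (hu : u ∈ L.grade 1) (hv : v ∈ L.grade 1) :
    L.br y (L.br u v) = L.br (L.br y u) v + L.br u (L.br y v) := by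
  have hj := L.jacobi 0 1 1 y hy u hu v hv
  norm_num at hj
  have hvy : L.br v y = - L.br y v := by
    have := L.skew 1 0 v hv y hy
    norm_num at this
    exact this
  have hsw : L.br v (L.br y u) = L.br (L.br y u) v := sym11 L hv (mem01 L hy hu)
  rw [hvy, hsw] at hj
  rw [map_neg] at hj
  linear_combination (norm := module) hj

lemma leib0 {y : V} (hy : y ∈ L.grade 0) (w : V) :
    L.d (L.br y w) = L.br (L.d y) w + L.br y (L.d w) := by
  have := L.leibniz 0 y hy w
  norm_num at this
  exact this

end Signs

end KurAux


section CSeq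

variable {V : Type*} [AddCommGroup V] [Module ℝ V]

open Finset KurAux

noncomputable def cseq (L : DGLA V) (y x : V) : ℕ → V
  | 0 => x
  | n + 1 => ((L.br y) ^ n) (L.br y x - L.d y)

variable (L : DGLA V) (y x : V)

lemma iter_eq_pow (n : ℕ) (v : V) : (fun w => L.br y w)^[n] v = ((L.br y) ^ n) v :=
  (Module.End.pow_apply _ _ _).symm

lemma cseq_succ (n : ℕ) :
    cseq L y x (n + 1) = L.br y (cseq L y x n) - (if n = 0 then L.d y else 0) := by
  cases n with
  | zero => simp [cseq]
  | succ m =>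
    simp only [cseq, Nat.succ_ne_zero, if_neg, sub_zero]
    rw [pow_succ']
    simp [Module.End.mul_apply]

lemma cseq_grade {y x : V} (hy : y ∈ L.grade 0) (hx : x ∈ L.grade 1) (n : ℕ) :
    cseq L y x n ∈ L.grade 1 := by
  induction n with
  | zero => exact hx
  | succ m ih =>
    rw [cseq_succ]
    refine sub_mem (mem01 L hy ih) ?_
    split
    · exact dmem1 L hy
    · exact zero_mem _

lemma cseq_zero_of_ge {N : ℕ} (hN : ∀ v : V, ((L.br y) ^ N) v = 0) (n : ℕ)
    (hn : N + 1 ≤ n) : cseq L y x n = 0 := by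
  obtain ⟨m, rfl⟩ : ∃ m, n = m + 1 := ⟨n - 1, by omega⟩
  have hm : N ≤ m := by omega
  obtain ⟨a, rfl⟩ : ∃ a, m = a + N := ⟨m - N, by omega⟩
  show ((L.br y) ^ (a + N)) (L.br y x - L.d y) = 0
  rw [pow_add, Module.End.mul_apply, hN, map_zero]

/-- reflected binomial-weighted sums -/
lemma sum_choose_reflect (g : ℕ → ℕ → V) (k : ℕ) :
    ∑ n ∈ range (k + 1), (k.choose n : ℝ) • g n (k - n)
      = ∑ n ∈ range (k + 1), (k.choose n : ℝ) • g (k - n) n := by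
  have := Finset.sum_range_reflect (fun j => (k.choose j : ℝ) • g j (k - j)) (k + 1)
  rw [← this]
  refine Finset.sum_congr rfl fun j hj => ?_
  have hjk : j ≤ k := by simpa [Nat.lt_succ_iff] using hj
  have h1 : k + 1 - 1 - j = k - j := by omega
  have h2 : k - (k - j) = j := by omega
  rw [h1, h2, Nat.choose_symm hjk]

end CSeq

section Star

variable {V : Type*} [AddCommGroup V] [Module ℝ V]

open Finset KurAux

variable (L : DGLA V)

lemma star {y x : V} (hy : y ∈ L.grade 0) (hx : x ∈ L.grade 1) (k : ℕ) :
    L.d (cseq L y x k) + (1 / 2 : ℝ) •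
        ∑ n ∈ range (k + 1), (k.choose n : ℝ) •
          L.br (cseq L y x n) (cseq L y x (k - n))
      = ((L.br y) ^ k) (L.d x + (1 / 2 : ℝ) • L.br x x) := by
  induction k with
  | zero => simp [cseq]
  | succ k ih =>
    set c := cseq L y x with hc
    have hc1 : ∀ n, c n ∈ L.grade 1 := fun n => cseq_grade L hy hx n
    -- abbreviation for the bracket terms
    have hBsym : ∀ n m, L.br (c n) (c m) = L.br (c m) (c n) :=
      fun n m => sym11 L (hc1 n) (hc1 m)
    -- S1b : reflected sum identity
    have S1b : ∑ n ∈ range (k + 1), (k.choose n : ℝ) • L.br (c n) (c (k + 1 - n))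
        = ∑ n ∈ range (k + 1), (k.choose n : ℝ) • L.br (c (n + 1)) (c (k - n)) := by
      have e1' := sum_choose_reflect (fun a b => L.br (c a) (c (b + 1))) k
      beta_reduce at e1'
      calc ∑ n ∈ range (k + 1), (k.choose n : ℝ) • L.br (c n) (c (k + 1 - n))
          = ∑ n ∈ range (k + 1), (k.choose n : ℝ) • L.br (c n) (c ((k - n) + 1)) := by
            refine Finset.sum_congr rfl fun n hn => ?_
            have hnk : n ≤ k := by simpa [Nat.lt_succ_iff] using hn
            have : k + 1 - n = (k - n) + 1 := by omega
            rw [this]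
        _ = ∑ n ∈ range (k + 1), (k.choose n : ℝ) • L.br (c (k - n)) (c (n + 1)) := e1'
        _ = ∑ n ∈ range (k + 1), (k.choose n : ℝ) • L.br (c (n + 1)) (c (k - n)) := by
            refine Finset.sum_congr rfl fun n hn => ?_
            exact congrArg _ (hBsym (k - n) (n + 1))
    -- S1 : Pascal identity for the quadratic sum
    have S1 : ∑ n ∈ range (k + 2), ((k + 1).choose n : ℝ) • L.br (c n) (c (k + 1 - n))
        = (2 : ℝ) • ∑ n ∈ range (k + 1), (k.choose n : ℝ) • L.br (c (n + 1)) (c (k - n)) := by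
      rw [Finset.sum_range_succ' (fun n => ((k + 1).choose n : ℝ) • L.br (c n) (c (k + 1 - n)))]
      have e2 : ∀ n, ((k + 1).choose (n + 1) : ℝ) = (k.choose n : ℝ) + (k.choose (n + 1) : ℝ) := by
        intro n; rw [Nat.choose_succ_succ]; push_cast; ring
      have e3 : ∀ n ∈ range (k + 1),
          ((k + 1).choose (n + 1) : ℝ) • L.br (c (n + 1)) (c (k + 1 - (n + 1)))
            = (k.choose n : ℝ) • L.br (c (n + 1)) (c (k - n))
              + (k.choose (n + 1) : ℝ) • L.br (c (n + 1)) (c (k - n)) := by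
        intro n hn
        rw [Nat.succ_sub_succ, e2, add_smul]
      rw [Finset.sum_congr rfl e3, Finset.sum_add_distrib]
      -- second piece + boundary term equals the reflected sum
      have hU1 : ∑ n ∈ range (k + 2), (k.choose n : ℝ) • L.br (c n) (c (k + 1 - n))
          = (∑ n ∈ range (k + 1), (k.choose (n + 1) : ℝ) • L.br (c (n + 1)) (c (k - n)))
            + (k.choose 0 : ℝ) • L.br (c 0) (c (k + 1)) := by
        rw [Finset.sum_range_succ' (fun n => (k.choose n : ℝ) • L.br (c n) (c (k + 1 - n)))]
        congr 1
        refine Finset.sum_congr rfl fun n hn => ?_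
        rw [Nat.succ_sub_succ]
      have hU2 : ∑ n ∈ range (k + 2), (k.choose n : ℝ) • L.br (c n) (c (k + 1 - n))
          = ∑ n ∈ range (k + 1), (k.choose n : ℝ) • L.br (c n) (c (k + 1 - n)) := by
        rw [Finset.sum_range_succ]
        simp [Nat.choose_succ_self]
      have hfin : (∑ n ∈ range (k + 1), (k.choose (n + 1) : ℝ) • L.br (c (n + 1)) (c (k - n)))
            + ((k + 1).choose 0 : ℝ) • L.br (c 0) (c (k + 1 - 0))
          = ∑ n ∈ range (k + 1), (k.choose n : ℝ) • L.br (c (n + 1)) (c (k - n)) := by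
        have : ((k + 1).choose 0 : ℝ) • L.br (c 0) (c (k + 1 - 0))
            = (k.choose 0 : ℝ) • L.br (c 0) (c (k + 1)) := by norm_num
        rw [this, ← hU1, hU2, S1b]
      rw [add_assoc, hfin, two_smul]
    -- S2 : recursion in the first slot
    have S2 : ∑ n ∈ range (k + 1), (k.choose n : ℝ) • L.br (c (n + 1)) (c (k - n))
        = (∑ n ∈ range (k + 1), (k.choose n : ℝ) • L.br (L.br y (c n)) (c (k - n)))
          - L.br (L.d y) (c k) := by
      have e4 : ∀ n ∈ range (k + 1),
          (k.choose n : ℝ) • L.br (c (n + 1)) (c (k - n))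
            = (k.choose n : ℝ) • L.br (L.br y (c n)) (c (k - n))
              - (if n = 0 then L.br (L.d y) (c k) else 0) := by
        intro n hn
        rw [hc, cseq_succ, ← hc]
        rw [map_sub, LinearMap.sub_apply, smul_sub]
        congr 1
        split
        · next h => subst h; simp
        · simp
      rw [Finset.sum_congr rfl e4, Finset.sum_sub_distrib]
      congr 1
      rw [Finset.sum_ite_eq' (range (k + 1)) 0]
      simp
    -- S4 : differential of c (k+1)
    have S4 : L.d (c (k + 1)) = L.br (L.d y) (c k) + L.br y (L.d (c k)) := by
      rw [hc, cseq_succ, ← hc, map_sub]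
      have : L.d (if k = 0 then L.d y else 0) = 0 := by
        split
        · exact L.d_sq y
        · exact map_zero _
      rw [this, sub_zero, leib0 L hy]
    -- S3 : bracketing the induction hypothesis with y
    have S3 : L.br y (L.d (c k) + (1 / 2 : ℝ) •
          ∑ n ∈ range (k + 1), (k.choose n : ℝ) • L.br (c n) (c (k - n)))
        = L.br y (L.d (c k)) +
            ∑ n ∈ range (k + 1), (k.choose n : ℝ) • L.br (L.br y (c n)) (c (k - n)) := by
      rw [map_add, map_smul, map_sum]
      congr 1
      have e5 : ∀ n ∈ range (k + 1),
          L.br y ((k.choose n : ℝ) • L.br (c n) (c (k - n)))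
            = (k.choose n : ℝ) • L.br (L.br y (c n)) (c (k - n))
              + (k.choose n : ℝ) • L.br (c n) (L.br y (c (k - n))) := by
        intro n hn
        rw [map_smul, der0 L hy (hc1 n) (hc1 (k - n)), smul_add]
      rw [Finset.sum_congr rfl e5, Finset.sum_add_distrib]
      have S3b : ∑ n ∈ range (k + 1), (k.choose n : ℝ) • L.br (c n) (L.br y (c (k - n)))
          = ∑ n ∈ range (k + 1), (k.choose n : ℝ) • L.br (L.br y (c n)) (c (k - n)) := by
        have e6 := sum_choose_reflect (fun a b => L.br (c a) (L.br y (c b))) k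
        beta_reduce at e6
        rw [e6]
        refine Finset.sum_congr rfl fun n hn => ?_
        exact congrArg _ (sym11 L (hc1 (k - n)) (mem01 L hy (hc1 n)))
      rw [S3b, smul_add]
      have : ∀ (X : V), (1 / 2 : ℝ) • X + (1 / 2 : ℝ) • X = X := fun X => by
        rw [← add_smul]; norm_num
      rw [this]
    -- assemble
    have hpow : ((L.br y) ^ (k + 1)) (L.d x + (1 / 2 : ℝ) • L.br x x)
        = L.br y (((L.br y) ^ k) (L.d x + (1 / 2 : ℝ) • L.br x x)) := by
      rw [pow_succ', Module.End.mul_apply]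
    rw [hpow, ← ih, S3, S4, S1]
    have h2 : (1 / 2 : ℝ) • ((2 : ℝ) •
        ∑ n ∈ range (k + 1), (k.choose n : ℝ) • L.br (c (n + 1)) (c (k - n)))
        = ∑ n ∈ range (k + 1), (k.choose n : ℝ) • L.br (c (n + 1)) (c (k - n)) := by
      rw [smul_smul]; norm_num
    rw [h2, S2]
    abel

end Star

section Gauge

variable {V : Type*} [AddCommGroup V] [Module ℝ V]

open Finset KurAux

variable (L : DGLA V)

lemma gaugeExp_pow (N : ℕ) (y x : V) :
    L.gaugeExp N y x
      = (∑ n ∈ range N, ((n.factorial : ℝ))⁻¹ • ((L.br y) ^ n) x)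
        - ∑ n ∈ range N, (((n + 1).factorial : ℝ))⁻¹ • ((L.br y) ^ n) (L.d y) := by
  unfold DGLA.gaugeExp
  simp only [iter_eq_pow]

lemma gauge_eq_csum {y : V} (x : V) (N : ℕ) (hN : ∀ v : V, ((L.br y) ^ N) v = 0) :
    L.gaugeExp N y x = ∑ n ∈ range (N + 1), ((n.factorial : ℝ))⁻¹ • cseq L y x n := by
  rw [gaugeExp_pow]
  rw [Finset.sum_range_succ' (fun n => ((n.factorial : ℝ))⁻¹ • cseq L y x n)]
  have e1 : ∀ n, cseq L y x (n + 1) = ((L.br y) ^ (n + 1)) x - ((L.br y) ^ n) (L.d y) := by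
    intro n
    show ((L.br y) ^ n) (L.br y x - L.d y) = _
    rw [map_sub, pow_succ, Module.End.mul_apply]
  have e2 : ∀ n, (((n + 1).factorial : ℝ))⁻¹ • cseq L y x (n + 1)
      = (((n + 1).factorial : ℝ))⁻¹ • ((L.br y) ^ (n + 1)) x
        - (((n + 1).factorial : ℝ))⁻¹ • ((L.br y) ^ n) (L.d y) := by
    intro n; rw [e1, smul_sub]
  rw [Finset.sum_congr rfl fun n _ => e2 n, Finset.sum_sub_distrib]
  have e3 : ∑ n ∈ range N, ((n.factorial : ℝ))⁻¹ • ((L.br y) ^ n) x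
      = (∑ n ∈ range N, (((n + 1).factorial : ℝ))⁻¹ • ((L.br y) ^ (n + 1)) x)
        + ((Nat.factorial 0 : ℝ))⁻¹ • cseq L y x 0 := by
    have e4 := Finset.sum_range_succ' (fun n => ((n.factorial : ℝ))⁻¹ • ((L.br y) ^ n) x) N
    have e5 := Finset.sum_range_succ (fun n => ((n.factorial : ℝ))⁻¹ • ((L.br y) ^ n) x) N
    rw [hN x, smul_zero, add_zero] at e5
    rw [← e5, e4]
    simp [cseq]
  rw [e3]
  abel

lemma pow_grade1 {y : V} (hy : y ∈ L.grade 0) (n : ℕ) {v : V} (hv : v ∈ L.grade 1) :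
    ((L.br y) ^ n) v ∈ L.grade 1 := by
  induction n with
  | zero => simpa using hv
  | succ m ih =>
    rw [pow_succ', Module.End.mul_apply]
    exact mem01 L hy ih

lemma gauge_grade {y x : V} (hy : y ∈ L.grade 0) (hx : x ∈ L.grade 1) (N : ℕ) :
    L.gaugeExp N y x ∈ L.grade 1 := by
  rw [gaugeExp_pow]
  refine sub_mem (Submodule.sum_mem _ fun n _ => Submodule.smul_mem _ _ ?_)
    (Submodule.sum_mem _ fun n _ => Submodule.smul_mem _ _ ?_)
  · exact pow_grade1 L hy n hx
  · exact pow_grade1 L hy n (dmem1 L hy)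

/-- coefficient juggling -/
lemma coeff_eq {n k : ℕ} (h : n ≤ k) :
    ((n.factorial : ℝ))⁻¹ * (((k - n).factorial : ℝ))⁻¹
      = ((k.factorial : ℝ))⁻¹ * (k.choose n : ℝ) := by
  have h1 := Nat.choose_mul_factorial_mul_factorial h
  have h2 : (k.choose n : ℝ) * (n.factorial : ℝ) * ((k - n).factorial : ℝ)
      = (k.factorial : ℝ) := by exact_mod_cast congrArg Nat.cast h1
  have hn : (n.factorial : ℝ) ≠ 0 := Nat.cast_ne_zero.mpr (Nat.factorial_ne_zero n)
  have hkn : ((k - n).factorial : ℝ) ≠ 0 := Nat.cast_ne_zero.mpr (Nat.factorial_ne_zero _)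
  have hk : (k.factorial : ℝ) ≠ 0 := Nat.cast_ne_zero.mpr (Nat.factorial_ne_zero k)
  field_simp
  linarith [h2]

/-- diagonal reindexing of a double sum supported below the antidiagonal -/
lemma double_sum_diag {K : ℕ} (f : ℕ → ℕ → V) (hf : ∀ m n, K ≤ m + n → f m n = 0) :
    ∑ m ∈ range K, ∑ n ∈ range K, f m n
      = ∑ k ∈ range K, ∑ n ∈ range (k + 1), f n (k - n) := by
  have step1 : ∑ m ∈ range K, ∑ n ∈ range K, f m n
      = ∑ m ∈ range K, ∑ n ∈ range (K - m), f m n := by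
    refine Finset.sum_congr rfl fun m _ => ?_
    refine (Finset.sum_subset (Finset.range_subset_range.mpr (by omega)) fun n hn hn2 => ?_).symm
    refine hf m n ?_
    simp only [mem_range] at hn hn2
    omega
  rw [step1, Finset.sum_sigma', Finset.sum_sigma']
  refine Finset.sum_nbij' (fun p => ⟨p.1 + p.2, p.1⟩) (fun p => ⟨p.2, p.1 - p.2⟩)
    ?_ ?_ ?_ ?_ ?_
  · rintro ⟨m, n⟩ hmn
    simp only [Finset.mem_sigma, mem_range] at hmn ⊢
    omega
  · rintro ⟨k, n⟩ hkn
    simp only [Finset.mem_sigma, mem_range] at hkn ⊢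
    omega
  · rintro ⟨m, n⟩ hmn
    simp only [Finset.mem_sigma, mem_range] at hmn
    simp only [Sigma.mk.inj_iff, heq_eq_eq]
    refine ⟨?_, ?_⟩ <;> first | trivial | omega
  · rintro ⟨k, n⟩ hkn
    simp only [Finset.mem_sigma, mem_range] at hkn
    simp only [Sigma.mk.inj_iff, heq_eq_eq]
    refine ⟨?_, ?_⟩ <;> first | trivial | omega
  · rintro ⟨m, n⟩ hmn
    simp only [Finset.mem_sigma, mem_range] at hmn
    simp only []
    congr 1
    omega

/-- Gauge transformations preserve the Maurer-Cartan equation. -/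
lemma gauge_MC {y x : V} (hy : y ∈ L.grade 0) (hx : x ∈ L.grade 1) (N : ℕ)
    (hN : ∀ v : V, ((L.br y) ^ N) v = 0)
    (hMC : L.d x + (1 / 2 : ℝ) • L.br x x = 0) :
    L.d (L.gaugeExp N y x) + (1 / 2 : ℝ) • L.br (L.gaugeExp N y x) (L.gaugeExp N y x) = 0 := by
  set c := cseq L y x with hc
  set M := N + 1 with hM
  set K := 2 * M with hK
  have hczero : ∀ n, M ≤ n → c n = 0 := fun n hn => cseq_zero_of_ge L y x hN n hn
  have hGK : L.gaugeExp N y x = ∑ n ∈ range K, ((n.factorial : ℝ))⁻¹ • c n := by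
    rw [gauge_eq_csum L x N hN, ← hc]
    refine Finset.sum_subset (Finset.range_subset_range.mpr (by omega)) fun n hn hn2 => ?_
    simp only [mem_range] at hn hn2
    rw [hczero n (by omega), smul_zero]
  rw [hGK]
  have hd : L.d (∑ n ∈ range K, ((n.factorial : ℝ))⁻¹ • c n)
      = ∑ n ∈ range K, ((n.factorial : ℝ))⁻¹ • L.d (c n) := by
    rw [map_sum]; exact Finset.sum_congr rfl fun n _ => map_smul _ _ _
  have hbr : L.br (∑ m ∈ range K, ((m.factorial : ℝ))⁻¹ • c m)
        (∑ n ∈ range K, ((n.factorial : ℝ))⁻¹ • c n)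
      = ∑ m ∈ range K, ∑ n ∈ range K,
          (((m.factorial : ℝ))⁻¹ * ((n.factorial : ℝ))⁻¹) • L.br (c m) (c n) := by
    have inner : ∀ n : ℕ, (L.br (∑ m ∈ range K, ((m.factorial : ℝ))⁻¹ • c m))
          (((n.factorial : ℝ))⁻¹ • c n)
        = ∑ m ∈ range K,
            (((m.factorial : ℝ))⁻¹ * ((n.factorial : ℝ))⁻¹) • L.br (c m) (c n) := by
      intro n
      rw [map_smul, map_sum, LinearMap.sum_apply, Finset.smul_sum]
      refine Finset.sum_congr rfl fun m _ => ?_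
      rw [map_smul, LinearMap.smul_apply, smul_smul, mul_comm ((n.factorial : ℝ))⁻¹]
    calc (L.br (∑ m ∈ range K, ((m.factorial : ℝ))⁻¹ • c m))
          (∑ n ∈ range K, ((n.factorial : ℝ))⁻¹ • c n)
        = ∑ n ∈ range K, (L.br (∑ m ∈ range K, ((m.factorial : ℝ))⁻¹ • c m))
            (((n.factorial : ℝ))⁻¹ • c n) :=
          map_sum (L.br (∑ m ∈ range K, ((m.factorial : ℝ))⁻¹ • c m))
            (fun n => ((n.factorial : ℝ))⁻¹ • c n) (range K)
      _ = ∑ n ∈ range K, ∑ m ∈ range K,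
            (((m.factorial : ℝ))⁻¹ * ((n.factorial : ℝ))⁻¹) • L.br (c m) (c n) :=
          Finset.sum_congr rfl fun n _ => inner n
      _ = ∑ m ∈ range K, ∑ n ∈ range K,
            (((m.factorial : ℝ))⁻¹ * ((n.factorial : ℝ))⁻¹) • L.br (c m) (c n) :=
          Finset.sum_comm
  rw [hd, hbr]
  rw [double_sum_diag (fun m n => (((m.factorial : ℝ))⁻¹ * ((n.factorial : ℝ))⁻¹) • L.br (c m) (c n))
    (by
      intro m n hmn
      beta_reduce
      rcases (by omega : M ≤ m ∨ M ≤ n) with h | h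
      · rw [hczero m h, map_zero, LinearMap.zero_apply, smul_zero]
      · rw [hczero n h, map_zero, smul_zero])]
  rw [Finset.smul_sum, ← Finset.sum_add_distrib]
  have key : ∀ k ∈ range K,
      ((k.factorial : ℝ))⁻¹ • L.d (c k)
        + (1 / 2 : ℝ) • ∑ n ∈ range (k + 1),
            (((n.factorial : ℝ))⁻¹ * ((((k - n).factorial : ℝ))⁻¹)) • L.br (c n) (c (k - n))
      = 0 := by
    intro k _
    have e1 : ∀ n ∈ range (k + 1),
        (((n.factorial : ℝ))⁻¹ * ((((k - n).factorial : ℝ))⁻¹)) • L.br (c n) (c (k - n))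
          = ((k.factorial : ℝ))⁻¹ • ((k.choose n : ℝ) • L.br (c n) (c (k - n))) := by
      intro n hn
      rw [smul_smul, coeff_eq (by simpa [Nat.lt_succ_iff] using hn)]
    rw [Finset.sum_congr rfl e1, ← Finset.smul_sum, smul_comm ((1 : ℝ)/2) (((k.factorial : ℝ))⁻¹), ← smul_add]
    rw [star L hy hx k, hMC, map_zero, smul_zero]
  calc ∑ k ∈ range K, (((k.factorial : ℝ))⁻¹ • L.d (c k)
        + (1 / 2 : ℝ) • ∑ n ∈ range (k + 1),
            (((n.factorial : ℝ))⁻¹ * ((((k - n).factorial : ℝ))⁻¹)) • L.br (c n) (c (k - n)))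
      = ∑ k ∈ range K, (0 : V) := Finset.sum_congr rfl key
    _ = 0 := Finset.sum_const_zero

end Gauge

section Inverse

variable {V : Type*} [AddCommGroup V] [Module ℝ V]

open Finset KurAux

variable (L : DGLA V)

lemma brneg_pow (y : V) (n : ℕ) (v : V) :
    ((L.br (-y)) ^ n) v = ((-1 : ℝ) ^ n) • ((L.br y) ^ n) v := by
  induction n with
  | zero => simp
  | succ m ih =>
    have h1 : ((L.br (-y)) ^ (m + 1)) v = L.br (-y) (((L.br (-y)) ^ m) v) := by
      rw [pow_succ', Module.End.mul_apply]
    have h2 : ((L.br y) ^ (m + 1)) v = L.br y (((L.br y) ^ m) v) := by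
      rw [pow_succ', Module.End.mul_apply]
    have hneg : L.br (-y) = -(L.br y) := map_neg L.br y
    rw [h1, ih, h2, hneg, LinearMap.neg_apply, map_smul, pow_succ]
    module

lemma pow_zero_ge {y : V} {N : ℕ} (hN : ∀ v : V, ((L.br y) ^ N) v = 0)
    {k : ℕ} (hk : N ≤ k) (v : V) : ((L.br y) ^ k) v = 0 := by
  obtain ⟨a, rfl⟩ : ∃ a, k = a + N := ⟨k - N, by omega⟩
  rw [pow_add, Module.End.mul_apply, hN, map_zero]

lemma alt_sum_ite (k : ℕ) :
    ∑ n ∈ range (k + 1), (-1 : ℝ) ^ n * (k.choose n : ℝ)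
      = if k = 0 then 1 else 0 := by
  rcases eq_or_ne k 0 with rfl | hk
  · simp
  · have h := Int.alternating_sum_range_choose_of_ne hk
    rw [if_neg hk]
    exact_mod_cast congrArg (fun z : ℤ => (z : ℝ)) h

lemma alt_sum_partial (k : ℕ) :
    ∑ n ∈ range (k + 1), (-1 : ℝ) ^ n * ((k + 1).choose n : ℝ) = (-1 : ℝ) ^ k := by
  have h := Int.alternating_sum_range_choose_of_ne (n := k + 1) (by omega)
  have h2 := Finset.sum_range_succ (fun m => ((-1) ^ m * (k + 1).choose m : ℤ)) (k + 1)
  rw [h] at h2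
  have h4 : (∑ m ∈ range (k + 1), ((-1) ^ m * (k + 1).choose m : ℤ)) = (-1) ^ k := by
    have h3 : (∑ m ∈ range (k + 1), ((-1) ^ m * (k + 1).choose m : ℤ))
        = -((-1) ^ (k + 1) * ((k + 1).choose (k + 1) : ℤ)) := by omega
    rw [h3, Nat.choose_self, pow_succ]
    push_cast
    ring
  exact_mod_cast congrArg (fun z : ℤ => (z : ℝ)) h4

lemma claimA {y : V} {N : ℕ} (hN1 : 1 ≤ N) (hN : ∀ v : V, ((L.br y) ^ N) v = 0) (v : V) :
    ∑ n ∈ range N, ∑ m ∈ range N,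
        (((-1 : ℝ) ^ n * ((n.factorial : ℝ))⁻¹) * ((m.factorial : ℝ))⁻¹) • ((L.br y) ^ (n + m)) v
      = v := by
  have hdg := double_sum_diag (V := V)
    (f := fun n m => (((-1 : ℝ) ^ n * ((n.factorial : ℝ))⁻¹) * ((m.factorial : ℝ))⁻¹)
      • ((L.br y) ^ (n + m)) v)
    (K := N)
    (by
      intro a b hab
      beta_reduce
      rw [pow_zero_ge L hN hab, smul_zero])
  beta_reduce at hdg
  rw [hdg]
  have inner : ∀ k ∈ range N,
      ∑ n ∈ range (k + 1),
          (((-1 : ℝ) ^ n * ((n.factorial : ℝ))⁻¹) * (((k - n).factorial : ℝ))⁻¹)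
            • ((L.br y) ^ (n + (k - n))) v
        = if k = 0 then v else 0 := by
    intro k _
    have e1 : ∀ n ∈ range (k + 1),
        (((-1 : ℝ) ^ n * ((n.factorial : ℝ))⁻¹) * (((k - n).factorial : ℝ))⁻¹)
            • ((L.br y) ^ (n + (k - n))) v
          = ((-1 : ℝ) ^ n * (k.choose n : ℝ)) • (((k.factorial : ℝ))⁻¹ • ((L.br y) ^ k) v) := by
      intro n hn
      have hnk : n ≤ k := by simpa [Nat.lt_succ_iff] using hn
      have hik : n + (k - n) = k := by omega
      rw [hik, smul_smul]
      congr 1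
      rw [mul_assoc, coeff_eq hnk]
      ring
    rw [Finset.sum_congr rfl e1, ← Finset.sum_smul, alt_sum_ite]
    split
    · next h => subst h; simp
    · simp
  rw [Finset.sum_congr rfl inner, Finset.sum_ite_eq' (range N) 0 (fun _ => v)]
  rw [if_pos (Finset.mem_range.mpr (by omega : 0 < N))]

lemma claimB {y : V} {N : ℕ} (hN : ∀ v : V, ((L.br y) ^ N) v = 0) (w : V) :
    ∑ n ∈ range N, ∑ m ∈ range N,
        (((-1 : ℝ) ^ n * ((n.factorial : ℝ))⁻¹) * (((m + 1).factorial : ℝ))⁻¹)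
          • ((L.br y) ^ (n + m)) w
      = ∑ n ∈ range N, ((-1 : ℝ) ^ n * (((n + 1).factorial : ℝ))⁻¹) • ((L.br y) ^ n) w := by
  have hdg := double_sum_diag (V := V)
    (f := fun n m => (((-1 : ℝ) ^ n * ((n.factorial : ℝ))⁻¹) * (((m + 1).factorial : ℝ))⁻¹)
      • ((L.br y) ^ (n + m)) w)
    (K := N)
    (by
      intro a b hab
      beta_reduce
      rw [pow_zero_ge L hN hab, smul_zero])
  beta_reduce at hdg
  rw [hdg]
  refine Finset.sum_congr rfl fun k _ => ?_
  have e1 : ∀ n ∈ range (k + 1),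
      (((-1 : ℝ) ^ n * ((n.factorial : ℝ))⁻¹) * (((k - n + 1).factorial : ℝ))⁻¹)
          • ((L.br y) ^ (n + (k - n))) w
        = ((-1 : ℝ) ^ n * ((k + 1).choose n : ℝ))
            • ((((k + 1).factorial : ℝ))⁻¹ • ((L.br y) ^ k) w) := by
    intro n hn
    have hnk : n ≤ k := by simpa [Nat.lt_succ_iff] using hn
    have hik : n + (k - n) = k := by omega
    have hsub : k - n + 1 = (k + 1) - n := by omega
    rw [hik, hsub, smul_smul]
    congr 1
    rw [mul_assoc, coeff_eq (by omega : n ≤ k + 1)]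
    ring
  rw [Finset.sum_congr rfl e1, ← Finset.sum_smul, alt_sum_partial, smul_smul]

lemma gauge_inv {y : V} {N : ℕ} (hN1 : 1 ≤ N) (hN : ∀ v : V, ((L.br y) ^ N) v = 0) (v : V) :
    L.gaugeExp N (-y) (L.gaugeExp N y v) = v := by
  have hApow : ∀ (n m : ℕ) (u : V),
      ((L.br y) ^ n) (((L.br y) ^ m) u) = ((L.br y) ^ (n + m)) u := by
    intro n m u
    rw [pow_add, Module.End.mul_apply]
  have hexp : ∀ n, ((L.br y) ^ n) (L.gaugeExp N y v)
      = (∑ m ∈ range N, ((m.factorial : ℝ))⁻¹ • ((L.br y) ^ (n + m)) v)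
        - ∑ m ∈ range N, (((m + 1).factorial : ℝ))⁻¹ • ((L.br y) ^ (n + m)) (L.d y) := by
    intro n
    rw [gaugeExp_pow, map_sub, map_sum, map_sum]
    congr 1 <;> exact Finset.sum_congr rfl fun m _ => by rw [map_smul, hApow]
  have lhs_eq : L.gaugeExp N (-y) (L.gaugeExp N y v)
      = (∑ n ∈ range N, ((-1 : ℝ) ^ n * ((n.factorial : ℝ))⁻¹)
            • ((L.br y) ^ n) (L.gaugeExp N y v))
        + ∑ n ∈ range N, ((-1 : ℝ) ^ n * (((n + 1).factorial : ℝ))⁻¹)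
            • ((L.br y) ^ n) (L.d y) := by
    rw [gaugeExp_pow, sub_eq_add_neg, ← Finset.sum_neg_distrib]
    congr 1
    · exact Finset.sum_congr rfl fun n _ => by rw [brneg_pow]; module
    · refine Finset.sum_congr rfl fun n _ => ?_
      rw [brneg_pow, map_neg, map_neg]
      module
  rw [lhs_eq]
  have hsplit : ∀ n ∈ range N,
      ((-1 : ℝ) ^ n * ((n.factorial : ℝ))⁻¹) • ((L.br y) ^ n) (L.gaugeExp N y v)
        = (∑ m ∈ range N,
            (((-1 : ℝ) ^ n * ((n.factorial : ℝ))⁻¹) * ((m.factorial : ℝ))⁻¹)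
              • ((L.br y) ^ (n + m)) v)
          - ∑ m ∈ range N,
            (((-1 : ℝ) ^ n * ((n.factorial : ℝ))⁻¹) * (((m + 1).factorial : ℝ))⁻¹)
              • ((L.br y) ^ (n + m)) (L.d y) := by
    intro n _
    rw [hexp n, smul_sub, Finset.smul_sum, Finset.smul_sum]
    congr 1 <;> exact Finset.sum_congr rfl fun m _ => by rw [smul_smul]
  rw [Finset.sum_congr rfl hsplit, Finset.sum_sub_distrib, claimA L hN1 hN v, claimB L hN]
  abel

end Inverse

/-- The Kuranishi set `M ⊆ H¹(L)`: elements of the harmonic space `H¹`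
(the kernel of both projections `dδ` onto boundaries and `δd` onto the
complement `C`) on which the quadratic obstruction vanishes, i.e. the
projection of `[Φ⁻¹m, Φ⁻¹m]` to `H²(L) ⊕ C²` (the complement of the
boundaries, cut out by `1 − dδ`) is zero.  Here `Ψ = Φ⁻¹`. -/
def kuranishiSet {V : Type*} [AddCommGroup V] [Module ℝ V]
    (L : GradedNilDGLA V) (δ : V →ₗ[ℝ] V) (Ψ : V → V) : Set V :=
  {m : V | m ∈ L.grade 1 ∧ L.d (δ m) = 0 ∧ δ (L.d m) = 0 ∧
    L.br (Ψ m) (Ψ m) = L.d (δ (L.br (Ψ m) (Ψ m)))}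

section Filt

variable {V : Type*} [AddCommGroup V] [Module ℝ V]

open Finset KurAux

def Flt (L : GradedNilDGLA V) (i : ℕ) : Submodule ℝ V :=
  ⨆ j : {j : ℤ // (i : ℤ) ≤ j}, L.lgrade j

variable (L : GradedNilDGLA V)

lemma lgrade_le_Flt {i : ℕ} {j : ℤ} (h : (i : ℤ) ≤ j) : L.lgrade j ≤ Flt L i :=
  le_iSup (fun j : {j : ℤ // (i : ℤ) ≤ j} => L.lgrade j) ⟨j, h⟩

lemma Flt_mono {i i' : ℕ} (h : i ≤ i') : Flt L i' ≤ Flt L i :=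
  iSup_le fun j => lgrade_le_Flt L (le_trans (by exact_mod_cast h) j.2)

lemma Flt_top (v : V) : v ∈ Flt L 1 := by
  have h := L.linternal.submodule_iSup_eq_top
  have hv : v ∈ ⨆ j, L.lgrade j := by rw [h]; trivial
  refine Submodule.iSup_induction (motive := fun w => w ∈ Flt L 1) _ hv
    (fun j u hu => ?_) (zero_mem _) (fun a b ha hb => add_mem ha hb)
  rcases le_or_gt j 0 with hj | hj
  · rw [L.lpos j hj] at hu
    simp only [Submodule.mem_bot] at hu
    rw [hu]; exact zero_mem _
  · exact lgrade_le_Flt L (by exact_mod_cast hj) hu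

lemma Flt_map {f : V →ₗ[ℝ] V} (hf : ∀ j : ℤ, ∀ u ∈ L.lgrade j, f u ∈ L.lgrade j)
    {i : ℕ} {v : V} (hv : v ∈ Flt L i) : f v ∈ Flt L i := by
  have hv' : v ∈ ⨆ j : {j : ℤ // (i : ℤ) ≤ j}, L.lgrade j := hv
  refine Submodule.iSup_induction (motive := fun w => f w ∈ Flt L i) _ hv'
    (fun j u hu => ?_) ?_ (fun a b ha hb => ?_)
  · beta_reduce
    exact lgrade_le_Flt L j.2 (hf j u hu)
  · beta_reduce
    rw [map_zero]; exact zero_mem _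
  · beta_reduce at ha hb ⊢
    rw [map_add]; exact add_mem ha hb

lemma Flt_br {i j : ℕ} {u v : V} (hu : u ∈ Flt L i) (hv : v ∈ Flt L j) :
    L.br u v ∈ Flt L (i + j) := by
  have main : ∀ u, u ∈ Flt L i → ∀ v, v ∈ Flt L j → L.br u v ∈ Flt L (i + j) := by
    intro u hu
    have hu' : u ∈ ⨆ a : {a : ℤ // (i : ℤ) ≤ a}, L.lgrade a := hu
    refine Submodule.iSup_induction
      (motive := fun w => ∀ v, v ∈ Flt L j → L.br w v ∈ Flt L (i + j)) _ hu'
      (fun a w hw => ?_) ?_ ?_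
    · beta_reduce
      intro v hv
      have hv' : v ∈ ⨆ b : {b : ℤ // (j : ℤ) ≤ b}, L.lgrade b := hv
      refine Submodule.iSup_induction
        (motive := fun z => L.br w z ∈ Flt L (i + j)) _ hv' (fun b z hz => ?_) ?_ ?_
      · beta_reduce
        refine lgrade_le_Flt L ?_ (L.br_lgrade a b w hw z hz)
        have h1 : (i : ℤ) ≤ a := a.2
        have h2 : (j : ℤ) ≤ b := b.2
        push_cast
        omega
      · beta_reduce
        rw [map_zero]; exact zero_mem _
      · intro p q hp hq
        beta_reduce at hp hq ⊢
        rw [map_add]; exact add_mem hp hq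
    · beta_reduce
      intro v hv
      rw [map_zero, LinearMap.zero_apply]; exact zero_mem _
    · intro p q hp hq
      beta_reduce at hp hq ⊢
      intro v hv
      have he : L.br (p + q) v = L.br p v + L.br q v := by
        rw [map_add, LinearMap.add_apply]
      rw [he]; exact add_mem (hp v hv) (hq v hv)
  exact main u hu v hv

lemma Flt_bot [FiniteDimensional ℝ V] :
    ∃ K : ℕ, 1 ≤ K ∧ ∀ v ∈ Flt L K, v = (0 : V) := by
  have hind := L.linternal.submodule_iSupIndep
  haveI := hind.fintypeNeBotOfFiniteDimensional
  have hb : ∃ b : ℤ, ∀ j : ℤ, L.lgrade j ≠ ⊥ → j ≤ b := by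
    set s := Finset.image (fun p : {j : ℤ // L.lgrade j ≠ ⊥} => (p : ℤ)) Finset.univ with hs
    rcases Finset.eq_empty_or_nonempty s with hse | hsn
    · refine ⟨0, fun j hj => ?_⟩
      exfalso
      have : (⟨j, hj⟩ : {j : ℤ // L.lgrade j ≠ ⊥}) ∈ (Finset.univ : Finset _) :=
        Finset.mem_univ _
      have : (j : ℤ) ∈ s := Finset.mem_image.mpr ⟨⟨j, hj⟩, this, rfl⟩
      rw [hse] at this
      exact absurd this (Finset.notMem_empty _)
    · refine ⟨s.max' hsn, fun j hj => ?_⟩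
      exact Finset.le_max' s j (Finset.mem_image.mpr ⟨⟨j, hj⟩, Finset.mem_univ _, rfl⟩)
  obtain ⟨b, hb⟩ := hb
  refine ⟨max 1 (b + 1).toNat, le_max_left _ _, ?_⟩
  intro v hv
  have hle : Flt L (max 1 (b + 1).toNat) ≤ ⊥ := by
    refine iSup_le fun j => ?_
    have hj : ((max 1 (b + 1).toNat : ℕ) : ℤ) ≤ j.1 := j.2
    have h1 : ((b + 1).toNat : ℤ) ≤ ((max 1 (b + 1).toNat : ℕ) : ℤ) := by
      exact_mod_cast Nat.le_max_right 1 (b + 1).toNat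
    have h2 : b + 1 ≤ ((b + 1).toNat : ℤ) := Int.self_le_toNat _
    have hjb : b < j.1 := by omega
    have hzero : L.lgrade j.1 = ⊥ := by
      by_contra hne
      exact absurd (hb _ hne) (by omega)
    rw [hzero]
  simpa using hle hv

lemma pow_Flt (y : V) {k : ℕ} (n : ℕ) {w : V} (hw : w ∈ Flt L k) :
    ((L.br y) ^ n) w ∈ Flt L k := by
  induction n with
  | zero => simpa using hw
  | succ m ih =>
    rw [pow_succ', Module.End.mul_apply]
    have h1 : L.br y (((L.br y) ^ m) w) ∈ Flt L (1 + k) := Flt_br L (Flt_top L y) ih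
    exact Flt_mono L (by omega) h1

lemma powdiff_Flt {y₁ y₂ : V} {i : ℕ} (hu : y₁ - y₂ ∈ Flt L i) (n : ℕ) (v : V) :
    ((L.br y₁) ^ n) v - ((L.br y₂) ^ n) v ∈ Flt L (i + 1) := by
  induction n with
  | zero => simpa using zero_mem _
  | succ m ih =>
    have key : ((L.br y₁) ^ (m + 1)) v - ((L.br y₂) ^ (m + 1)) v
        = L.br y₁ (((L.br y₁) ^ m) v - ((L.br y₂) ^ m) v)
          + L.br (y₁ - y₂) (((L.br y₂) ^ m) v) := by
      rw [pow_succ', pow_succ', Module.End.mul_apply, Module.End.mul_apply, map_sub]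
      have : L.br (y₁ - y₂) (((L.br y₂) ^ m) v)
          = L.br y₁ (((L.br y₂) ^ m) v) - L.br y₂ (((L.br y₂) ^ m) v) := by
        rw [map_sub, LinearMap.sub_apply]
      rw [this]
      abel
    rw [key]
    refine add_mem ?_ ?_
    · have h1 : L.br y₁ (((L.br y₁) ^ m) v - ((L.br y₂) ^ m) v) ∈ Flt L (1 + (i + 1)) :=
        Flt_br L (Flt_top L y₁) ih
      exact Flt_mono L (by omega) h1
    · have h2 : L.br (y₁ - y₂) (((L.br y₂) ^ m) v) ∈ Flt L (i + 1) :=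
        Flt_br L hu (Flt_top L _)
      exact h2

/-- L2: the filtration estimate for differences of gauge transforms. -/
lemma gauge_diff_Flt {N : ℕ} (hN1 : 1 ≤ N) {y₁ y₂ : V} {i : ℕ}
    (hu : y₁ - y₂ ∈ Flt L i) (x : V) :
    L.toDGLA.gaugeExp N y₁ x - L.toDGLA.gaugeExp N y₂ x + L.d (y₁ - y₂) ∈ Flt L (i + 1) := by
  obtain ⟨N', rfl⟩ : ∃ N', N = N' + 1 := ⟨N - 1, by omega⟩
  have hdu : L.d (y₁ - y₂) ∈ Flt L i := Flt_map L L.d_lgrade hu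
  set S1 : V := ∑ n ∈ range (N' + 1),
    ((n.factorial : ℝ))⁻¹ • (((L.br y₁) ^ n) x - ((L.br y₂) ^ n) x) with hS1
  set S2 : V := ∑ n ∈ range (N' + 1),
    (((n + 1).factorial : ℝ))⁻¹ • (((L.br y₁) ^ n) (L.d y₂) - ((L.br y₂) ^ n) (L.d y₂)) with hS2
  set T : V := ∑ n ∈ range (N' + 1),
    (((n + 1).factorial : ℝ))⁻¹ • ((L.br y₁) ^ n) (L.d (y₁ - y₂)) with hT
  have hkey : L.toDGLA.gaugeExp (N' + 1) y₁ x - L.toDGLA.gaugeExp (N' + 1) y₂ x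
        + L.d (y₁ - y₂)
      = S1 - S2 - (T - L.d (y₁ - y₂)) := by
    rw [gaugeExp_pow, gaugeExp_pow, hS1, hS2, hT]
    have e1 : ∑ n ∈ range (N' + 1),
        ((n.factorial : ℝ))⁻¹ • (((L.br y₁) ^ n) x - ((L.br y₂) ^ n) x)
        = (∑ n ∈ range (N' + 1), ((n.factorial : ℝ))⁻¹ • ((L.br y₁) ^ n) x)
          - ∑ n ∈ range (N' + 1), ((n.factorial : ℝ))⁻¹ • ((L.br y₂) ^ n) x := by
      rw [← Finset.sum_sub_distrib]
      exact Finset.sum_congr rfl fun n _ => smul_sub _ _ _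
    have e2 : ∑ n ∈ range (N' + 1),
        (((n + 1).factorial : ℝ))⁻¹ • (((L.br y₁) ^ n) (L.d y₂) - ((L.br y₂) ^ n) (L.d y₂))
        = (∑ n ∈ range (N' + 1), (((n + 1).factorial : ℝ))⁻¹ • ((L.br y₁) ^ n) (L.d y₂))
          - ∑ n ∈ range (N' + 1), (((n + 1).factorial : ℝ))⁻¹ • ((L.br y₂) ^ n) (L.d y₂) := by
      rw [← Finset.sum_sub_distrib]
      exact Finset.sum_congr rfl fun n _ => smul_sub _ _ _
    have e3 : ∑ n ∈ range (N' + 1), (((n + 1).factorial : ℝ))⁻¹ • ((L.br y₁) ^ n) (L.d y₁)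
        = (∑ n ∈ range (N' + 1), (((n + 1).factorial : ℝ))⁻¹ • ((L.br y₁) ^ n) (L.d (y₁ - y₂)))
          + ∑ n ∈ range (N' + 1), (((n + 1).factorial : ℝ))⁻¹ • ((L.br y₁) ^ n) (L.d y₂) := by
      rw [← Finset.sum_add_distrib]
      refine Finset.sum_congr rfl fun n _ => ?_
      have : L.d y₁ = L.d (y₁ - y₂) + L.d y₂ := by rw [map_sub]; abel
      rw [this, map_add, smul_add]
    rw [e1, e2, e3]
    abel
  rw [hkey]
  refine sub_mem (sub_mem ?_ ?_) ?_
  · exact Submodule.sum_mem _ fun n _ =>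
      Submodule.smul_mem _ _ (powdiff_Flt L hu n x)
  · exact Submodule.sum_mem _ fun n _ =>
      Submodule.smul_mem _ _ (powdiff_Flt L hu n (L.d y₂))
  · have hT0 : T = (∑ n ∈ range N',
        (((n + 1 + 1).factorial : ℝ))⁻¹ • ((L.br y₁) ^ (n + 1)) (L.d (y₁ - y₂)))
          + L.d (y₁ - y₂) := by
      rw [hT, Finset.sum_range_succ'
        (fun n => (((n + 1).factorial : ℝ))⁻¹ • ((L.br y₁) ^ n) (L.d (y₁ - y₂)))]
      congr 1
      simp
    rw [hT0, add_sub_cancel_right]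
    refine Submodule.sum_mem _ fun n _ => Submodule.smul_mem _ _ ?_
    have h1 : L.br y₁ (L.d (y₁ - y₂)) ∈ Flt L (1 + i) := Flt_br L (Flt_top L y₁) hdu
    have h2 : ((L.br y₁) ^ n) (L.br y₁ (L.d (y₁ - y₂))) ∈ Flt L (1 + i) :=
      pow_Flt L y₁ n h1
    have h3 : ((L.br y₁) ^ (n + 1)) (L.d (y₁ - y₂))
        = ((L.br y₁) ^ n) (L.br y₁ (L.d (y₁ - y₂))) := by
      rw [pow_succ, Module.End.mul_apply]
    rw [h3]
    exact Flt_mono L (by omega) h2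

end Filt

section KMain

variable {V : Type*} [AddCommGroup V] [Module ℝ V]

open Finset KurAux

variable (L : GradedNilDGLA V) (δ : V →ₗ[ℝ] V) (Ψ : V → V)

lemma y0_delta (hH0 : ∀ y ∈ L.grade 0, L.d y = 0 → y = 0)
    (hdδd : ∀ v : V, L.d (δ (L.d v)) = L.d v)
    (hδgrade : ∀ p : ℤ, ∀ x ∈ L.grade p, δ x ∈ L.grade (p - 1))
    {y : V} (hy : y ∈ L.grade 0) : y = δ (L.d y) := by
  have h1 : L.d y ∈ L.grade 1 := dmem1 L.toDGLA hy
  have h2 : δ (L.d y) ∈ L.grade 0 := by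
    have := hδgrade 1 _ h1; norm_num at this; exact this
  have h3 : y - δ (L.d y) ∈ L.grade 0 := sub_mem hy h2
  have h4 : L.d (y - δ (L.d y)) = 0 := by rw [map_sub, hdδd]; exact sub_self _
  exact sub_eq_zero.mp (hH0 _ h3 h4)

lemma psi_MC (hdδd : ∀ v : V, L.d (δ (L.d v)) = L.d v)
    (hΨmem : ∀ x ∈ L.grade 1, Ψ x ∈ L.grade 1)
    (hΦΨ : ∀ x ∈ L.grade 1, Ψ x + (1 / 2 : ℝ) • δ (L.br (Ψ x) (Ψ x)) = x)
    {m : V} (hm : m ∈ kuranishiSet L δ Ψ) : L.toDGLA.IsMC (Ψ m) := by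
  obtain ⟨hm1, hdδm, hδdm, hobs⟩ := hm
  have hx1 : Ψ m ∈ L.grade 1 := hΨmem m hm1
  have hΦ : Ψ m + (1 / 2 : ℝ) • δ (L.br (Ψ m) (Ψ m)) = m := hΦΨ m hm1
  have hFdm : L.d (Ψ m) + (1 / 2 : ℝ) • L.br (Ψ m) (Ψ m) = L.d m := by
    have e := congrArg L.d hΦ
    rw [map_add, map_smul] at e
    rw [← e, ← hobs]
  refine ⟨hx1, ?_⟩
  rw [hFdm, ← hdδd m, hδdm, map_zero]

lemma slice_K (hδδ : ∀ v : V, δ (δ v) = 0)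
    (hdδd : ∀ v : V, L.d (δ (L.d v)) = L.d v)
    (hδdδ : ∀ v : V, δ (L.d (δ v)) = δ v)
    (hδgrade : ∀ p : ℤ, ∀ x ∈ L.grade p, δ x ∈ L.grade (p - 1))
    (hΨΦ : ∀ x ∈ L.grade 1, Ψ (x + (1 / 2 : ℝ) • δ (L.br x x)) = x)
    {z : V} (hz1 : z ∈ L.grade 1) (hzMC : L.d z + (1 / 2 : ℝ) • L.br z z = 0)
    (hdδz : L.d (δ z) = 0) :
    (z + (1 / 2 : ℝ) • δ (L.br z z)) ∈ kuranishiSet L δ Ψ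
      ∧ Ψ (z + (1 / 2 : ℝ) • δ (L.br z z)) = z := by
  have hΨm : Ψ (z + (1 / 2 : ℝ) • δ (L.br z z)) = z := hΨΦ z hz1
  have hbr2 : L.br z z ∈ L.grade 2 := mem11 L.toDGLA hz1 hz1
  have hδbr : δ (L.br z z) ∈ L.grade 1 := by
    have := hδgrade 2 _ hbr2; norm_num at this; exact this
  have hm1 : z + (1 / 2 : ℝ) • δ (L.br z z) ∈ L.grade 1 :=
    add_mem hz1 (Submodule.smul_mem _ _ hδbr)
  have hbreq : L.br z z = (-2 : ℝ) • L.d z := by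
    linear_combination (norm := module) (2 : ℝ) • hzMC
  refine ⟨⟨hm1, ?_, ?_, ?_⟩, hΨm⟩
  · have hδm : δ (z + (1 / 2 : ℝ) • δ (L.br z z)) = δ z := by
      rw [map_add, map_smul, hδδ, smul_zero, add_zero]
    rw [hδm, hdδz]
  · have hdm : L.d (z + (1 / 2 : ℝ) • δ (L.br z z))
        = L.d z + (1 / 2 : ℝ) • L.d (δ (L.br z z)) := by rw [map_add, map_smul]
    rw [hdm, map_add, map_smul, hδdδ]
    have e : δ (L.d z) + (1 / 2 : ℝ) • δ (L.br z z)
        = δ (L.d z + (1 / 2 : ℝ) • L.br z z) := by rw [map_add, map_smul]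
    rw [e, hzMC, map_zero]
  · rw [hΨm, hbreq, map_smul, map_smul, hdδd]

end KMain


/-- for a graded nilpotent DGLA with `H⁰(L) = 0`, with splitting
operator `δ`, `Φ(x) = x + (1/2) δ[x,x]` with inverse `Ψ`, and Kuranishi set
`M ⊆ H¹(L)` with representing section `ξ = Φ⁻¹|_M = Ψ|_M`, the action map
`exp(L⁰) × M → MC(L)`, `(e^y, m) ↦ e^y ∗ ξ(m)`, is a bijection: it lands in
`MC(L)`, and every Maurer–Cartan element arises from a unique pair `(y, m)`.
In particular `MC(L) → M` is a trivial principal bundle for the gauge group. -/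
theorem kuranishi_principal_bundle
    {V : Type*} [AddCommGroup V] [Module ℝ V] [FiniteDimensional ℝ V]
    (L : GradedNilDGLA V) (δ : V →ₗ[ℝ] V)
    (hδgrade : ∀ p : ℤ, ∀ x ∈ L.grade p, δ x ∈ L.grade (p - 1))
    (hδlgrade : ∀ i : ℤ, ∀ x ∈ L.lgrade i, δ x ∈ L.lgrade i)
    (hδδ : ∀ v : V, δ (δ v) = 0)
    (hdδd : ∀ v : V, L.d (δ (L.d v)) = L.d v)
    (hδdδ : ∀ v : V, δ (L.d (δ v)) = δ v)
    (hH0 : ∀ y ∈ L.grade 0, L.d y = 0 → y = 0)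
    (N : ℕ) (hN : ∀ y ∈ L.grade 0, ∀ v : V, (fun w => L.br y w)^[N] v = 0)
    (Ψ : V → V)
    (hΨmem : ∀ x ∈ L.grade 1, Ψ x ∈ L.grade 1)
    (hΨΦ : ∀ x ∈ L.grade 1, Ψ (x + (1 / 2 : ℝ) • δ (L.br x x)) = x)
    (hΦΨ : ∀ x ∈ L.grade 1, Ψ x + (1 / 2 : ℝ) • δ (L.br (Ψ x) (Ψ x)) = x) :
    (∀ y ∈ L.grade 0, ∀ m ∈ kuranishiSet L δ Ψ,
      L.toDGLA.IsMC (L.toDGLA.gaugeExp N y (Ψ m))) ∧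
    (∀ x : V, L.toDGLA.IsMC x →
      ∃! P : V × V, P.1 ∈ L.grade 0 ∧ P.2 ∈ kuranishiSet L δ Ψ ∧
        L.toDGLA.gaugeExp N P.1 (Ψ P.2) = x) := by
  classical
  have hNp : ∀ y ∈ L.grade 0, ∀ v : V, ((L.br y) ^ N) v = 0 := by
    intro y hy v
    rw [← iter_eq_pow]
    exact hN y hy v
  rcases Nat.eq_zero_or_pos N with hN0 | hN1
  · -- degenerate case : V = 0
    subst hN0
    have htriv : ∀ v : V, v = 0 := by
      intro v
      simpa using hN 0 (zero_mem _) v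
    have heq : ∀ a b : V, a = b := fun a b => (htriv a).trans (htriv b).symm
    constructor
    · intro y _ m _
      constructor
      · rw [heq (L.toDGLA.gaugeExp 0 y (Ψ m)) 0]
        exact zero_mem _
      · exact heq _ _
    · intro x _
      refine ⟨(0, 0), ⟨zero_mem _, ⟨zero_mem _, ?_, ?_, heq _ _⟩, heq _ _⟩, ?_⟩
      · rw [map_zero, map_zero]
      · rw [map_zero, map_zero]
      · rintro ⟨a, b⟩ _
        exact Prod.ext (htriv a) (htriv b)
  · -- main case
    obtain ⟨K, hK1, hKbot⟩ := Flt_bot L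
    have part1 : ∀ y ∈ L.grade 0, ∀ m ∈ kuranishiSet L δ Ψ,
        L.toDGLA.IsMC (L.toDGLA.gaugeExp N y (Ψ m)) := by
      intro y hy m hm
      have hmc := psi_MC L δ Ψ hdδd hΨmem hΦΨ hm
      exact ⟨gauge_grade L.toDGLA hy hmc.1 N,
        gauge_MC L.toDGLA hy hmc.1 N (hNp y hy) hmc.2⟩
    refine ⟨part1, ?_⟩
    intro x hx
    obtain ⟨hx1, hxMC⟩ := hx
    -- uniqueness engine
    have huniq : ∀ a b ma mb : V, a ∈ L.grade 0 → b ∈ L.grade 0 →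
        ma ∈ kuranishiSet L δ Ψ → mb ∈ kuranishiSet L δ Ψ →
        L.toDGLA.gaugeExp N a (Ψ ma) = x → L.toDGLA.gaugeExp N b (Ψ mb) = x →
        a = b ∧ ma = mb := by
      intro a b ma mb ha hb hma hmb hga hgb
      obtain ⟨hma1, hdδma, _, _⟩ := hma
      obtain ⟨hmb1, hdδmb, _, _⟩ := hmb
      have hza : Ψ ma = L.toDGLA.gaugeExp N (-a) x := by
        rw [← hga]
        exact (gauge_inv L.toDGLA hN1 (hNp a ha) (Ψ ma)).symm
      have hzb : Ψ mb = L.toDGLA.gaugeExp N (-b) x := by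
        rw [← hgb]
        exact (gauge_inv L.toDGLA hN1 (hNp b hb) (Ψ mb)).symm
      have hdδza : L.d (δ (Ψ ma)) = 0 := by
        have hΦa := hΦΨ ma hma1
        have e : δ (Ψ ma) = δ ma := by
          have h := congrArg δ hΦa
          rw [map_add, map_smul, hδδ, smul_zero, add_zero] at h
          exact h
        rw [e, hdδma]
      have hdδzb : L.d (δ (Ψ mb)) = 0 := by
        have hΦb := hΦΨ mb hmb1
        have e : δ (Ψ mb) = δ mb := by
          have h := congrArg δ hΦb
          rw [map_add, map_smul, hδδ, smul_zero, add_zero] at h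
          exact h
        rw [e, hdδmb]
      have hstep : ∀ i : ℕ, (a - b) ∈ Flt L i → (a - b) ∈ Flt L (i + 1) := by
        intro i hui
        have hneg : (-a) - (-b) ∈ Flt L i := by
          have e : (-a) - (-b) = -(a - b) := by abel
          rw [e]; exact neg_mem hui
        have hdiff := gauge_diff_Flt L hN1 hneg x
        have hrmem : (Ψ ma - Ψ mb) - L.d (a - b) ∈ Flt L (i + 1) := by
          have e : (Ψ ma - Ψ mb) - L.d (a - b)
              = (L.toDGLA.gaugeExp N (-a) x - L.toDGLA.gaugeExp N (-b) x)
                + L.d ((-a) - (-b)) := by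
            rw [hza, hzb, map_sub, map_sub, map_neg, map_neg]
            abel
          rw [e]; exact hdiff
        have hdu : L.d (a - b) ∈ Flt L (i + 1) := by
          have hcalc : L.d (a - b)
              = -(L.d (δ ((Ψ ma - Ψ mb) - L.d (a - b)))) := by
            calc L.d (a - b) = L.d (δ (L.d (a - b))) := (hdδd _).symm
              _ = L.d (δ ((Ψ ma - Ψ mb) - ((Ψ ma - Ψ mb) - L.d (a - b)))) := by
                  congr 2
                  abel
              _ = L.d (δ (Ψ ma)) - L.d (δ (Ψ mb))
                    - L.d (δ ((Ψ ma - Ψ mb) - L.d (a - b))) := by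
                  rw [map_sub, map_sub, map_sub, map_sub]
              _ = -(L.d (δ ((Ψ ma - Ψ mb) - L.d (a - b)))) := by
                  rw [hdδza, hdδzb]
                  abel
          rw [hcalc]
          exact neg_mem (Flt_map L L.d_lgrade (Flt_map L hδlgrade hrmem))
        have hu_eq : a - b = δ (L.d (a - b)) :=
          y0_delta L δ hH0 hdδd hδgrade (sub_mem ha hb)
        rw [hu_eq]
        exact Flt_map L hδlgrade hdu
      have hu_all : ∀ j : ℕ, (a - b) ∈ Flt L (j + 1) := by
        intro j
        induction j with
        | zero => exact Flt_top L _
        | succ j ih => exact hstep _ ih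
      have hu0 : a - b = 0 := by
        refine hKbot _ ?_
        obtain ⟨K', rfl⟩ : ∃ K', K = K' + 1 := ⟨K - 1, by omega⟩
        exact hu_all K'
      have hab : a = b := sub_eq_zero.mp hu0
      refine ⟨hab, ?_⟩
      have hzz : Ψ ma = Ψ mb := by rw [hza, hzb, hab]
      have h1 := hΦΨ ma hma1
      have h2 := hΦΨ mb hmb1
      rw [← h1, ← h2, hzz]
    -- existence : fixed point construction
    set T : V → V := fun yy => δ (L.toDGLA.gaugeExp N yy x + L.d yy) with hTdef
    have hTgrade : ∀ yy ∈ L.grade 0, T yy ∈ L.grade 0 := by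
      intro yy hyy
      have h1 : L.toDGLA.gaugeExp N yy x + L.d yy ∈ L.grade 1 :=
        add_mem (gauge_grade _ hyy hx1 N) (KurAux.dmem1 L.toDGLA hyy)
      have h2 := hδgrade 1 _ h1
      have h3 : ((1 : ℤ) - 1) = 0 := by norm_num
      rw [h3] at h2
      simp only [hTdef]
      exact h2
    have hTiter_grade : ∀ k : ℕ, T^[k] 0 ∈ L.grade 0 := by
      intro k
      induction k with
      | zero => simpa using zero_mem _
      | succ k ih =>
        rw [Function.iterate_succ_apply']
        exact hTgrade _ ih
    have hTgen : ∀ (i : ℕ) (a b : V), a - b ∈ Flt L i → T a - T b ∈ Flt L (i + 1) := by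
      intro i a b hab
      have e : T a - T b
          = δ ((L.toDGLA.gaugeExp N a x - L.toDGLA.gaugeExp N b x) + L.d (a - b)) := by
        simp only [hTdef]
        rw [← map_sub]
        congr 1
        rw [map_sub]
        abel
      rw [e]
      exact Flt_map L hδlgrade (gauge_diff_Flt L hN1 hab x)
    have hTdiff : ∀ k : ℕ, T^[k + 1] 0 - T^[k] 0 ∈ Flt L (k + 1) := by
      intro k
      induction k with
      | zero => exact Flt_top L _
      | succ k ih =>
        rw [Function.iterate_succ_apply' T k] at ih
        rw [Function.iterate_succ_apply' T (k + 1), Function.iterate_succ_apply' T k]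
        exact hTgen (k + 1) _ _ ih
    have hyg : T^[K] 0 ∈ L.grade 0 := hTiter_grade K
    have hyfix : T (T^[K] 0) = T^[K] 0 := by
      have h2 : T^[K + 1] 0 - T^[K] 0 ∈ Flt L K :=
        Flt_mono L (by omega) (hTdiff K)
      have h3 : T^[K + 1] 0 - T^[K] 0 = 0 := hKbot _ h2
      rw [Function.iterate_succ_apply' T K 0] at h3
      exact sub_eq_zero.mp h3
    have hy2 : T^[K] 0 = δ (L.toDGLA.gaugeExp N (T^[K] 0) x + L.d (T^[K] 0)) := by
      conv_lhs => rw [← hyfix]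
    have hdδz : L.d (δ (L.toDGLA.gaugeExp N (T^[K] 0) x)) = 0 := by
      have h1 := congrArg L.d hy2
      rw [map_add, map_add, hdδd] at h1
      exact (right_eq_add.mp h1).symm ▸ rfl
    have hzg : L.toDGLA.gaugeExp N (T^[K] 0) x ∈ L.grade 1 :=
      gauge_grade _ hyg hx1 N
    have hzMC : L.d (L.toDGLA.gaugeExp N (T^[K] 0) x)
        + (1 / 2 : ℝ) • L.br (L.toDGLA.gaugeExp N (T^[K] 0) x)
            (L.toDGLA.gaugeExp N (T^[K] 0) x) = 0 :=
      gauge_MC L.toDGLA hyg hx1 N (hNp _ hyg) hxMC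
    obtain ⟨hmK, hΨm⟩ := slice_K L δ Ψ hδδ hdδd hδdδ hδgrade hΨΦ hzg hzMC hdδz
    have hginv : L.toDGLA.gaugeExp N (-(T^[K] 0)) (L.toDGLA.gaugeExp N (T^[K] 0) x) = x :=
      gauge_inv L.toDGLA hN1 (hNp _ hyg) x
    refine ⟨(-(T^[K] 0),
        L.toDGLA.gaugeExp N (T^[K] 0) x + (1 / 2 : ℝ) •
          δ (L.br (L.toDGLA.gaugeExp N (T^[K] 0) x) (L.toDGLA.gaugeExp N (T^[K] 0) x))),
      ⟨neg_mem hyg, hmK, by rw [hΨm]; exact hginv⟩, ?_⟩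
    rintro ⟨a, b⟩ ⟨ha, hb, hgab⟩
    obtain ⟨h1, h2⟩ := huniq a (-(T^[K] 0)) b _ ha (neg_mem hyg) hb hmK hgab
      (by rw [hΨm]; exact hginv)
    exact Prod.ext h1 h2
end
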